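/- arXiv:2107.10579 — 5 statements merged into one kernel-verified Lean document; each statement's English description precedes it below -/
import Mathlib

section
/- Let A be a self-adjoint operator, ψ a unit vector in D(A²), λ := ⟨ψ, Aψ⟩, and ε := ‖(A − λ)ψ‖. Suppose α < λ < β are real numbers with (α, β) ∩ σ(A) = ∅. Then β ≤ λ + ε²/(λ − α) and α ≥ λ + ε²/(λ − β). -/
noncomputable section
open scoped ComplexInnerProductSpace
open Filter

variable {H : Type} [NormedAddCommGroup H] [InnerProductSpace ℂ H] [CompleteSpace H]

/-- The resolvent set of a partially defined operator: `z` such that `A - z` has a bounded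
two-sided inverse. -/
def ResolventSetP (A : H →ₗ.[ℂ] H) : Set ℂ :=
  { z | ∃ R : H →L[ℂ] H, (∀ x : H, ∃ hx : R x ∈ A.domain, A ⟨R x, hx⟩ - z • R x = x) ∧
      (∀ ψ : A.domain, R (A ψ - z • (ψ : H)) = (ψ : H)) }

/-- The spectrum of a partially defined operator. -/
def SpectrumP (A : H →ₗ.[ℂ] H) : Set ℂ := (ResolventSetP A)ᶜ

lemma symm_of_saP {A : H →ₗ.[ℂ] H} (hA : IsSelfAdjoint A) (x y : A.domain) :
    ⟪(A x : H), (y : H)⟫ = ⟪(x : H), (A y : H)⟫ := by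
  have h := LinearPMap.adjoint_isFormalAdjoint (T := A) hA.dense_domain
  rw [LinearPMap.isSelfAdjoint_def] at hA
  rw [hA] at h
  exact h x y

lemma resolvent_lower_bound {A : H →ₗ.[ℂ] H} (hA : IsSelfAdjoint A) {m r : ℝ} (hr : 0 < r)
    (hgap : ∀ t ∈ Set.Ioo (m - r) (m + r), (t : ℂ) ∈ ResolventSetP A)
    (ψ : A.domain) : r * ‖(ψ : H)‖ ≤ ‖A ψ - ((m : ℂ)) • (ψ : H)‖ := by
  obtain ⟨R, h1, h2⟩ := hgap m ⟨by linarith, by linarith⟩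
  have hsym := symm_of_saP hA
  -- R is self-adjoint
  have hRsa : IsSelfAdjoint R := by
    rw [ContinuousLinearMap.isSelfAdjoint_iff_isSymmetric]
    intro x y
    obtain ⟨hx, hx2⟩ := h1 x
    obtain ⟨hy, hy2⟩ := h1 y
    calc ⟪R x, y⟫ = ⟪(R x : H), (A ⟨R y, hy⟩ : H) - (m : ℂ) • R y⟫ := by rw [hy2]
      _ = ⟪(R x : H), (A ⟨R y, hy⟩ : H)⟫ - (m : ℂ) * ⟪R x, R y⟫ := by
          rw [inner_sub_right, inner_smul_right]
      _ = ⟪(A ⟨R x, hx⟩ : H), (R y : H)⟫ - (m : ℂ) * ⟪R x, R y⟫ := by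
          rw [hsym ⟨R x, hx⟩ ⟨R y, hy⟩]
      _ = ⟪(A ⟨R x, hx⟩ : H) - (m : ℂ) • R x, (R y : H)⟫ := by
          rw [inner_sub_left, inner_smul_left]
          norm_num
      _ = ⟪x, R y⟫ := by rw [hx2]
  -- every spectral point of R has norm ≤ 1/r
  have hspec : ∀ μ : ℂ, μ ∈ spectrum ℂ R → ‖μ‖ ≤ 1 / r := by
    intro μ hμ
    by_contra hlt
    push_neg at hlt
    have hr1 : (0:ℝ) < 1 / r := by positivity
    have hμ0 : μ ≠ 0 := by
      intro h; rw [h, norm_zero] at hlt; linarith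
    have hμre : μ = (μ.re : ℂ) := hRsa.mem_spectrum_eq_re hμ
    set s : ℝ := μ.re with hs
    have habs : ‖μ‖ = |s| := by rw [hμre]; exact (Complex.norm_real s).trans (Real.norm_eq_abs s)
    have hs0 : s ≠ 0 := by
      intro h; rw [habs, h, abs_zero] at hlt; linarith
    have hsr : 1 / |s| < r := by
      rw [habs] at hlt
      rw [div_lt_iff₀ (abs_pos.mpr hs0)]
      nlinarith [(div_lt_iff₀ hr).mp hlt]
    have habs2 : |1 / s| < r := by rwa [abs_div, abs_one]
    set w : ℝ := m + 1 / s with hw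
    have hwmem : w ∈ Set.Ioo (m - r) (m + r) := by
      rw [abs_lt] at habs2
      constructor <;> simp only [hw] <;> linarith [habs2.1, habs2.2]
    obtain ⟨R', h1', h2'⟩ := hgap w hwmem
    have hwm : (w : ℂ) - (m : ℂ) = μ⁻¹ := by
      rw [hw, hμre]
      push_cast
      rw [one_div]
      ring
    -- resolvent identities
    have key1 : ∀ x : H, R' x - R x = μ⁻¹ • R (R' x) := by
      intro x
      obtain ⟨hx', hx'2⟩ := h1' x
      have hAx : (A ⟨R' x, hx'⟩ : H) = x + (w : ℂ) • R' x := sub_eq_iff_eq_add.mp hx'2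
      have h := h2 ⟨R' x, hx'⟩
      simp only [LinearPMap.mk_apply] at h
      rw [hAx] at h
      have e : x + (w : ℂ) • R' x - (m : ℂ) • R' x = x + ((w : ℂ) - (m : ℂ)) • R' x := by
        rw [sub_smul]; abel
      rw [e, map_add, map_smul, hwm] at h
      exact sub_eq_iff_eq_add'.mpr h.symm
    have key2 : ∀ x : H, R' x - R x = μ⁻¹ • R' (R x) := by
      intro x
      obtain ⟨hx, hx2⟩ := h1 x
      have hAx : (A ⟨R x, hx⟩ : H) = x + (m : ℂ) • R x := sub_eq_iff_eq_add.mp hx2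
      have h := h2' ⟨R x, hx⟩
      simp only [LinearPMap.mk_apply] at h
      rw [hAx] at h
      have e : x + (m : ℂ) • R x - (w : ℂ) • R x = x + ((m : ℂ) - (w : ℂ)) • R x := by
        rw [sub_smul]; abel
      rw [e, map_add, map_smul] at h
      have hmw : (m : ℂ) - (w : ℂ) = -μ⁻¹ := by rw [← hwm]; ring
      rw [hmw, neg_smul, ← sub_eq_add_neg] at h
      exact sub_eq_iff_eq_add'.mpr (sub_eq_iff_eq_add.mp h)
    -- μ is not in the spectrum of R: contradiction
    have hunit : IsUnit ((algebraMap ℂ (H →L[ℂ] H)) μ - R) := by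
      refine ⟨⟨(algebraMap ℂ (H →L[ℂ] H)) μ - R, μ⁻¹ • (1 + μ⁻¹ • R'), ?_, ?_⟩, rfl⟩
      · ext x
        have k1' : R (R' x) = μ • R' x - μ • R x := by
          have h := congrArg (fun y => μ • y) (key1 x)
          simp only [smul_sub, smul_smul, mul_inv_cancel₀ hμ0, one_smul] at h
          exact h.symm
        simp only [ContinuousLinearMap.mul_apply, ContinuousLinearMap.sub_apply,
          ContinuousLinearMap.smul_apply, ContinuousLinearMap.add_apply,
          ContinuousLinearMap.one_apply, Algebra.algebraMap_eq_smul_one,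
          map_add, map_smul, map_sub, k1']
        match_scalars <;> field_simp <;> ring
      · ext x
        have k2' : R' (R x) = μ • R' x - μ • R x := by
          have h := congrArg (fun y => μ • y) (key2 x)
          simp only [smul_sub, smul_smul, mul_inv_cancel₀ hμ0, one_smul] at h
          exact h.symm
        simp only [ContinuousLinearMap.mul_apply, ContinuousLinearMap.sub_apply,
          ContinuousLinearMap.smul_apply, ContinuousLinearMap.add_apply,
          ContinuousLinearMap.one_apply, Algebra.algebraMap_eq_smul_one,
          map_add, map_smul, map_sub, k2']
        match_scalars <;> field_simp <;> ring
    exact (spectrum.notMem_iff.mpr hunit) hμ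
  -- hence ‖R‖ ≤ 1/r
  have hRnorm : ‖R‖ ≤ 1 / r := by
    have e1 : spectralRadius ℂ R = (‖R‖₊ : ENNReal) := hRsa.spectralRadius_eq_nnnorm
    have e2 : spectralRadius ℂ R ≤ ENNReal.ofReal (1 / r) := by
      rw [spectralRadius]
      refine iSup₂_le fun μ hμ => ?_
      rw [← ENNReal.ofReal_coe_nnreal, coe_nnnorm]
      exact ENNReal.ofReal_le_ofReal (hspec μ hμ)
    rw [e1, ← ENNReal.ofReal_coe_nnreal, coe_nnnorm] at e2
    exact (ENNReal.ofReal_le_ofReal_iff (by positivity)).mp e2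
  -- conclude
  have hb : ‖(ψ : H)‖ ≤ (1 / r) * ‖A ψ - (m : ℂ) • (ψ : H)‖ := by
    calc ‖(ψ : H)‖ = ‖R (A ψ - (m : ℂ) • (ψ : H))‖ := by rw [h2 ψ]
      _ ≤ ‖R‖ * ‖A ψ - (m : ℂ) • (ψ : H)‖ := R.le_opNorm _
      _ ≤ (1 / r) * ‖A ψ - (m : ℂ) • (ψ : H)‖ :=
          mul_le_mul_of_nonneg_right hRnorm (norm_nonneg _)
  have := mul_le_mul_of_nonneg_left hb hr.le
  calc r * ‖(ψ : H)‖ ≤ r * ((1 / r) * ‖A ψ - (m : ℂ) • (ψ : H)‖) := this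
    _ = ‖A ψ - (m : ℂ) • (ψ : H)‖ := by field_simp

/-- Kato–Temple inequality: if `ψ` is a unit vector in `D(A²)` with Rayleigh quotient `λ`
and residual `ε`, and `(α, β) ∋ λ` contains no spectrum of `A`, then
`β ≤ λ + ε²/(λ − α)` and `α ≥ λ + ε²/(λ − β)`. -/
theorem kato_temple
    (A : H →ₗ.[ℂ] H) (hA : IsSelfAdjoint A)
    (ψ : A.domain) (hψ : ‖(ψ : H)‖ = 1)
    (hψ2 : A ψ ∈ A.domain)
    (lam eps α β : ℝ)
    (hlam : (lam : ℂ) = ⟪(ψ : H), A ψ⟫)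
    (heps : eps = ‖A ψ - (lam : ℂ) • (ψ : H)‖)
    (h_alpha_lam : α < lam) (h_lam_beta : lam < β)
    (hgap : ∀ t ∈ Set.Ioo α β, (t : ℂ) ∉ SpectrumP A) :
    β ≤ lam + eps ^ 2 / (lam - α) ∧ α ≥ lam + eps ^ 2 / (lam - β) := by
  have heps0 : 0 ≤ eps := heps ▸ norm_nonneg _
  set m : ℝ := (α + β) / 2 with hm
  set r : ℝ := (β - α) / 2 with hrdef
  have hr : 0 < r := by rw [hrdef]; linarith
  have hgap' : ∀ t ∈ Set.Ioo (m - r) (m + r), (t : ℂ) ∈ ResolventSetP A := by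
    intro t ht
    have ht' : t ∈ Set.Ioo α β := by
      constructor
      · have := ht.1; rw [hm, hrdef] at this; linarith
      · have := ht.2; rw [hm, hrdef] at this; linarith
    have := hgap t ht'
    rw [SpectrumP, Set.notMem_compl_iff] at this
    exact this
  have key := resolvent_lower_bound hA hr hgap' ψ
  rw [hψ, mul_one] at key
  -- orthogonality of the residual
  have hinner0 : ⟪(ψ : H), A ψ - (lam : ℂ) • (ψ : H)⟫ = 0 := by
    rw [inner_sub_right, inner_smul_right, ← hlam, inner_self_eq_norm_sq_to_K, hψ]
    push_cast
    ring
  -- norm decomposition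
  have hdecomp : ‖A ψ - (m : ℂ) • (ψ : H)‖ ^ 2 = eps ^ 2 + (lam - m) ^ 2 := by
    have e : A ψ - (m : ℂ) • (ψ : H)
        = (A ψ - (lam : ℂ) • (ψ : H)) + ((lam - m : ℝ) : ℂ) • (ψ : H) := by
      push_cast
      rw [sub_smul]
      abel
    rw [e, @norm_add_sq ℂ]
    have hcross : ⟪A ψ - (lam : ℂ) • (ψ : H), ((lam - m : ℝ) : ℂ) • (ψ : H)⟫ = 0 := by
      rw [inner_smul_right, ← inner_conj_symm, hinner0]
      simp
    rw [hcross]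
    rw [norm_smul, hψ]
    simp only [map_zero, mul_zero, add_zero, mul_one]
    rw [← heps]
    rw [Complex.norm_real, Real.norm_eq_abs, sq_abs]
  -- the key quadratic inequality
  have hq : (β - lam) * (lam - α) ≤ eps ^ 2 := by
    have h2 : r ^ 2 ≤ ‖A ψ - (m : ℂ) • (ψ : H)‖ ^ 2 := by
      apply sq_le_sq' <;> nlinarith [norm_nonneg (A ψ - (m : ℂ) • (ψ : H))]
    rw [hdecomp] at h2
    rw [hrdef, hm] at h2
    nlinarith
  constructor
  · have h1 : β - lam ≤ eps ^ 2 / (lam - α) := by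
      rw [le_div_iff₀ (by linarith : (0:ℝ) < lam - α)]
      linarith [hq]
    linarith
  · have h2 : eps ^ 2 / (lam - β) ≤ α - lam := by
      rw [div_le_iff_of_neg (by linarith : lam - β < 0)]
      nlinarith [hq]
    rw [ge_iff_le]
    linarith
end
end

section
/- In the Rayleigh–Ritz setting, if λ_i < λ_{i+1} (where λ_j = lim_k λ_j^{(k)}), then the open interval (λ_i, λ_{i+1}) contains no point of the spectrum of A. -/
noncomputable section
open scoped ComplexInnerProductSpace
open Filter

variable {H : Type} [NormedAddCommGroup H] [InnerProductSpace ℂ H] [CompleteSpace H]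

/-- `z` is an eigenvalue of `A`. -/
def HasEigen (A : H →ₗ.[ℂ] H) (z : ℂ) : Prop :=
  ∃ ψ : A.domain, (ψ : H) ≠ 0 ∧ A ψ = z • (ψ : H)

/-- The eigenspace of `A` for the eigenvalue `z` (as the span of all eigenvectors). -/
def eigSpace (A : H →ₗ.[ℂ] H) (z : ℂ) : Submodule ℂ H :=
  Submodule.span ℂ {ψ : H | ∃ h : ψ ∈ A.domain, A ⟨ψ, h⟩ = z • ψ}

/-- `A` has purely discrete spectrum: every spectral point is an isolated eigenvalue of
finite multiplicity. -/
def PurelyDiscrete (A : H →ₗ.[ℂ] H) : Prop :=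
  ∀ z ∈ SpectrumP A, z ∉ closure (SpectrumP A \ {z}) ∧ HasEigen A z ∧
    FiniteDimensional ℂ (eigSpace A z)

/-- The `(i+1)`-st Ritz value of `A` compressed to the finite-dimensional subspace `V ⊆ D(A)`,
given by the Courant–Fischer characterization of the `(i+1)`-st smallest eigenvalue of the
compression `P_V A P_V` restricted to `V`. -/
def ritzVal (A : H →ₗ.[ℂ] H) (V : Submodule ℂ H) (i : ℕ) : ℝ :=
  sInf { r : ℝ | ∃ W : Submodule ℂ H, W ≤ V ∧ Module.finrank ℂ W = i + 1 ∧
    r = sSup { s : ℝ | ∃ ψ : H, ∃ _ : ψ ∈ W, ∃ hA : ψ ∈ A.domain, ‖ψ‖ = 1 ∧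
      s = (⟪ψ, A ⟨ψ, hA⟩⟫).re } }

/-! ### Auxiliary definitions and lemmas for the proof -/

/-- The set of Rayleigh quotient values of `A` over unit vectors of `W`. -/
def rrRaySet (A : H →ₗ.[ℂ] H) (W : Submodule ℂ H) : Set ℝ :=
  { s : ℝ | ∃ ψ : H, ∃ _ : ψ ∈ W, ∃ hA : ψ ∈ A.domain, ‖ψ‖ = 1 ∧
      s = (⟪ψ, A ⟨ψ, hA⟩⟫).re }

/-- The candidate set whose infimum is the Ritz value. -/
def rrRitzSet (A : H →ₗ.[ℂ] H) (V : Submodule ℂ H) (i : ℕ) : Set ℝ :=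
  { r : ℝ | ∃ W : Submodule ℂ H, W ≤ V ∧ Module.finrank ℂ W = i + 1 ∧
      r = sSup (rrRaySet A W) }

lemma rrRitzVal_eq (A : H →ₗ.[ℂ] H) (V : Submodule ℂ H) (i : ℕ) :
    ritzVal A V i = sInf (rrRitzSet A V i) := rfl

lemma rrMem_raySet {A : H →ₗ.[ℂ] H} {W : Submodule ℂ H} {ψ : H} (hW : ψ ∈ W)
    (hD : ψ ∈ A.domain) (hn : ‖ψ‖ = 1) : (⟪ψ, A ⟨ψ, hD⟩⟫).re ∈ rrRaySet A W :=
  ⟨ψ, hW, hD, hn, rfl⟩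

lemma rrRaySet_nonempty {A : H →ₗ.[ℂ] H} {W : Submodule ℂ H} (hWd : W ≤ A.domain)
    (hW : W ≠ ⊥) : (rrRaySet A W).Nonempty := by
  obtain ⟨x, hxW, hx0⟩ := (Submodule.ne_bot_iff W).mp hW
  have hx : ‖x‖ ≠ 0 := norm_ne_zero_iff.mpr hx0
  have hmem : ((‖x‖ : ℂ))⁻¹ • x ∈ W := W.smul_mem _ hxW
  refine ⟨_, rrMem_raySet hmem (hWd hmem) ?_⟩
  rw [norm_smul, norm_inv, Complex.norm_real, Real.norm_eq_abs, abs_of_nonneg (norm_nonneg x),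
    inv_mul_cancel₀ hx]

lemma rrRaySet_bddAbove {A : H →ₗ.[ℂ] H} {W : Submodule ℂ H} [FiniteDimensional ℂ ↥W]
    (hWd : W ≤ A.domain) : BddAbove (rrRaySet A W) := by
  let B : ↥W →ₗ[ℂ] H := A.toFun ∘ₗ Submodule.inclusion hWd
  have hc : Continuous fun w : ↥W => (⟪(w : H), B w⟫ : ℂ).re :=
    Complex.continuous_re.comp (Continuous.inner continuous_subtype_val
      B.continuous_of_finiteDimensional)
  have hK : IsCompact (Metric.sphere (0 : ↥W) 1) := isCompact_sphere 0 1
  refine BddAbove.mono ?_ (hK.bddAbove_image hc.continuousOn)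
  rintro s ⟨ψ, hψW, hψD, hψ1, rfl⟩
  refine ⟨⟨ψ, hψW⟩, ?_, ?_⟩
  · rw [mem_sphere_zero_iff_norm]; exact hψ1
  · rfl

lemma rrRaySet_lb {A : H →ₗ.[ℂ] H} {c : ℝ}
    (hbdd : ∀ ψ : A.domain, c * ‖(ψ : H)‖ ^ 2 ≤ (⟪(ψ : H), A ψ⟫).re)
    {W : Submodule ℂ H} {s : ℝ} (hs : s ∈ rrRaySet A W) : c ≤ s := by
  obtain ⟨ψ, hψW, hψA, h1, rfl⟩ := hs
  have h := hbdd ⟨ψ, hψA⟩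
  simpa [h1] using h

lemma rrRitzSet_lb {A : H →ₗ.[ℂ] H} {c : ℝ}
    (hbdd : ∀ ψ : A.domain, c * ‖(ψ : H)‖ ^ 2 ≤ (⟪(ψ : H), A ψ⟫).re)
    {Vm : Submodule ℂ H} [FiniteDimensional ℂ ↥Vm] (hVd : Vm ≤ A.domain) {i : ℕ} {r : ℝ}
    (hr : r ∈ rrRitzSet A Vm i) : c ≤ r := by
  obtain ⟨W, hWV, hWrank, rfl⟩ := hr
  haveI := Submodule.finiteDimensional_of_le hWV
  have hWd := hWV.trans hVd
  have hWne : W ≠ ⊥ := by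
    intro h; rw [h, finrank_bot] at hWrank; omega
  obtain ⟨s, hs⟩ := rrRaySet_nonempty hWd hWne
  exact le_trans (rrRaySet_lb hbdd hs) (le_csSup (rrRaySet_bddAbove hWd) hs)

lemma rrRitzSet_bddBelow {A : H →ₗ.[ℂ] H} {c : ℝ}
    (hbdd : ∀ ψ : A.domain, c * ‖(ψ : H)‖ ^ 2 ≤ (⟪(ψ : H), A ψ⟫).re)
    {Vm : Submodule ℂ H} [FiniteDimensional ℂ ↥Vm] (hVd : Vm ≤ A.domain) (i : ℕ) :
    BddBelow (rrRitzSet A Vm i) :=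
  ⟨c, fun _ hr => rrRitzSet_lb hbdd hVd hr⟩

lemma rrRitzSet_mono {A : H →ₗ.[ℂ] H} {V V' : Submodule ℂ H} (h : V ≤ V') (i : ℕ) :
    rrRitzSet A V i ⊆ rrRitzSet A V' i := by
  rintro r ⟨W, hWV, hWr, rfl⟩; exact ⟨W, hWV.trans h, hWr, rfl⟩

lemma rrComplex_re_term (μ : ℝ) (z : ℂ) :
    ((starRingEnd ℂ) z * ((μ : ℂ) * z)).re = μ * ‖z‖ ^ 2 := by
  have h : (starRingEnd ℂ) z * ((μ : ℂ) * z) = (μ : ℂ) * ((starRingEnd ℂ) z * z) := by ring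
  rw [h, mul_comm ((starRingEnd ℂ) z), Complex.mul_conj']
  rw [← Complex.ofReal_pow, ← Complex.ofReal_mul, Complex.ofReal_re]

/-- Key finite-dimensional lemma: if `t` is an eigenvalue of `A` with eigenvector in `Vm` and
`ritzVal A Vm i < t`, then some element of the candidate set at level `i+1` is `≤ t`. -/
lemma rrKey {A : H →ₗ.[ℂ] H}
    (hsymm : ∀ x y : A.domain, (⟪(A x : H), (y : H)⟫ : ℂ) = ⟪(x : H), (A y : H)⟫)
    {Vm : Submodule ℂ H} [FiniteDimensional ℂ ↥Vm] (hVd : Vm ≤ A.domain)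
    {t : ℝ} {φ : H} (hφV : φ ∈ Vm) (hφ0 : φ ≠ 0) (hφD : φ ∈ A.domain)
    (hφe : A ⟨φ, hφD⟩ = (t : ℂ) • φ)
    {i : ℕ} (hn : i + 1 ≤ Module.finrank ℂ ↥Vm) (hi : ritzVal A Vm i < t) :
    ∃ r ∈ rrRitzSet A Vm (i + 1), r ≤ t := by
  classical
  obtain ⟨n, hnn⟩ : ∃ n, Module.finrank ℂ ↥Vm = n := ⟨_, rfl⟩
  let B : ↥Vm →ₗ[ℂ] H := A.toFun ∘ₗ Submodule.inclusion hVd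
  have hB : ∀ (v : ↥Vm) (h : (v : H) ∈ A.domain), B v = A ⟨(v : H), h⟩ := fun v h => rfl
  let T : ↥Vm →ₗ[ℂ] ↥Vm := (Submodule.orthogonalProjectionOnto Vm).toLinearMap ∘ₗ B
  have hPT : ∀ v : ↥Vm, T v = Submodule.orthogonalProjectionOnto Vm (B v) := fun v => rfl
  have hTB : ∀ v w : ↥Vm, (⟪v, T w⟫ : ℂ) = ⟪(v : H), B w⟫ := fun v w =>
    Submodule.inner_orthogonalProjectionOnto_eq_of_mem_left (K := Vm) v (B w)
  have hBT : ∀ v w : ↥Vm, (⟪T v, w⟫ : ℂ) = ⟪B v, (w : H)⟫ := fun v w =>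
    Submodule.inner_orthogonalProjectionOnto_eq_of_mem_right (K := Vm) w (B v)
  have hTsym : T.IsSymmetric := by
    intro v w
    rw [hBT, hTB, hB v (hVd v.2), hB w (hVd w.2)]
    exact hsymm ⟨(v : H), hVd v.2⟩ ⟨(w : H), hVd w.2⟩
  let b := hTsym.eigenvectorBasis hnn
  let μ := hTsym.eigenvalues hnn
  have hrepr : ∀ (v : ↥Vm) (j : Fin n), b.repr (T v) j = (μ j : ℂ) * b.repr v j := fun v j =>
    hTsym.eigenvectorBasis_apply_self_apply hnn v j
  have hray : ∀ (v : ↥Vm) (hD : (v : H) ∈ A.domain),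
      (⟪(v : H), A ⟨(v : H), hD⟩⟫ : ℂ).re = ∑ j, μ j * ‖b.repr v j‖ ^ 2 := by
    intro v hD
    have h1 : (⟪(v : H), A ⟨(v : H), hD⟩⟫ : ℂ) = ⟪v, T v⟫ := by
      rw [hTB, hB v hD]
    rw [h1, ← LinearIsometryEquiv.inner_map_map b.repr, PiLp.inner_apply, Complex.re_sum]
    refine Finset.sum_congr rfl fun j _ => ?_
    rw [hrepr, RCLike.inner_apply]
    rw [mul_comm]
    exact rrComplex_re_term (μ j) (b.repr v j)
  have hsum1 : ∀ v : ↥Vm, ‖v‖ = 1 → ∑ j, ‖b.repr v j‖ ^ 2 = 1 := by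
    intro v hv
    have h2 : ‖b.repr v‖ = 1 := by rw [LinearIsometryEquiv.norm_map]; exact hv
    have h3 := EuclideanSpace.norm_eq (b.repr v)
    rw [h2] at h3
    exact Real.sqrt_eq_one.mp h3.symm
  -- `t` is an eigenvalue of `T`
  have hv₀ : T ⟨φ, hφV⟩ = (t : ℂ) • ⟨φ, hφV⟩ := by
    rw [hPT, hB ⟨φ, hφV⟩ hφD, hφe, map_smul]
    congr 1
    exact Submodule.orthogonalProjectionOnto_mem_subspace_eq_self ⟨φ, hφV⟩
  obtain ⟨j₀, hj₀⟩ : ∃ j, μ j = t := by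
    have h0 : b.repr ⟨φ, hφV⟩ ≠ 0 := by
      intro h
      apply hφ0
      have h1 : (⟨φ, hφV⟩ : ↥Vm) = 0 := by
        apply b.repr.injective
        simpa using h
      exact congrArg Subtype.val h1
    obtain ⟨j, hj⟩ := Function.ne_iff.mp (show (b.repr ⟨φ, hφV⟩).ofLp ≠ 0 from
      fun h => h0 (by simpa using congrArg (WithLp.toLp 2) h))
    refine ⟨j, ?_⟩
    have h1 := hrepr ⟨φ, hφV⟩ j
    rw [hv₀, map_smul] at h1
    have h2 : (t : ℂ) * b.repr ⟨φ, hφV⟩ j = (μ j : ℂ) * b.repr ⟨φ, hφV⟩ j := h1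
    have h3 := mul_right_cancel₀ hj h2
    exact_mod_cast h3.symm
  -- spans of subsets of the eigenbasis
  let ES : Finset (Fin n) → Submodule ℂ ↥Vm := fun S => Submodule.span ℂ (b '' ↑S)
  have hfr : ∀ S : Finset (Fin n), Module.finrank ℂ ↥(ES S) = S.card := by
    intro S
    have hli : LinearIndependent ℂ fun j : {x // x ∈ S} => b ↑j :=
      b.orthonormal.linearIndependent.comp _ Subtype.val_injective
    have hr : Set.range (fun j : {x // x ∈ S} => b ↑j) = b '' ↑S := by
      ext x
      constructor
      · rintro ⟨⟨j, hj⟩, rfl⟩; exact ⟨j, hj, rfl⟩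
      · rintro ⟨j, hj, rfl⟩; exact ⟨⟨j, hj⟩, rfl⟩
    have := finrank_span_eq_card hli
    rw [hr] at this
    rw [show ES S = Submodule.span ℂ (b '' ↑S) from rfl, this, Fintype.card_coe]
  have hmemES : ∀ (S : Finset (Fin n)) (j : Fin n), j ∈ S → b j ∈ ES S := fun S j hj =>
    Submodule.subset_span ⟨j, hj, rfl⟩
  have horth : ∀ (S : Finset (Fin n)) (j : Fin n), j ∉ S → ∀ u ∈ ES S,
      (⟪b j, u⟫ : ℂ) = 0 := by
    intro S j hj u hu
    induction hu using Submodule.span_induction with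
    | mem x hx =>
      obtain ⟨l, hl, rfl⟩ := hx
      exact b.orthonormal.2 (show j ≠ l by rintro rfl; exact hj hl)
    | zero => exact inner_zero_right _
    | add x y hx hy ihx ihy => rw [inner_add_right, ihx, ihy, add_zero]
    | smul a x hx ih => rw [inner_smul_right, ih, mul_zero]
  let S' : Finset (Fin n) := Finset.univ.filter fun j => μ j < t
  -- lower bound argument: `S'.card ≥ i + 1`
  have hd' : i + 1 ≤ S'.card := by
    by_contra hcon
    push_neg at hcon
    obtain ⟨S₁, -, hS₁⟩ := Finset.exists_subset_card_eq
      (show i + 1 ≤ (Finset.univ : Finset (Fin n)).card by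
        rw [Finset.card_univ, Fintype.card_fin]; omega)
    have hW₁mem : sSup (rrRaySet A ((ES S₁).map Vm.subtype)) ∈ rrRitzSet A Vm i :=
      ⟨_, Submodule.map_subtype_le _ _, by
        rw [Submodule.finrank_map_subtype_eq, hfr, hS₁], rfl⟩
    rw [rrRitzVal_eq] at hi
    obtain ⟨r, hr, hrt⟩ := exists_lt_of_csInf_lt ⟨_, hW₁mem⟩ hi
    obtain ⟨W, hWV, hWrank, rfl⟩ := hr
    haveI := Submodule.finiteDimensional_of_le hWV
    have hW'rank : Module.finrank ℂ ↥(W.comap Vm.subtype) = i + 1 := by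
      rw [← hWrank]; exact (Submodule.comapSubtypeEquivOfLe hWV).finrank_eq
    have hdim := Submodule.finrank_sup_add_finrank_inf_eq (W.comap Vm.subtype) (ES S')ᗮ
    have horthrank := Submodule.finrank_add_finrank_orthogonal (ES S')
    have hsup_le := Submodule.finrank_le ((W.comap Vm.subtype) ⊔ (ES S')ᗮ)
    have hES' := hfr S'
    have hpos : 0 < Module.finrank ℂ ↥((W.comap Vm.subtype) ⊓ (ES S')ᗮ) := by omega
    have hne : (W.comap Vm.subtype) ⊓ (ES S')ᗮ ≠ ⊥ := by
      intro h; rw [h, finrank_bot] at hpos; omega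
    obtain ⟨v, hv, hv0⟩ := (Submodule.ne_bot_iff _).mp hne
    have hvn : ‖v‖ ≠ 0 := norm_ne_zero_iff.mpr hv0
    set u : ↥Vm := ((‖v‖ : ℂ))⁻¹ • v with hu
    have hu1 : ‖u‖ = 1 := by
      rw [hu, norm_smul, norm_inv, Complex.norm_real, Real.norm_eq_abs,
        abs_of_nonneg (norm_nonneg v), inv_mul_cancel₀ hvn]
    have huW : (u : H) ∈ W := Submodule.mem_comap.mp (Submodule.smul_mem _ _ hv.1)
    have huO : u ∈ (ES S')ᗮ := Submodule.smul_mem _ _ hv.2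
    have huD : (u : H) ∈ A.domain := hVd u.2
    have hu1' : ‖(u : H)‖ = 1 := hu1
    have hval : t ≤ (⟪(u : H), A ⟨(u : H), huD⟩⟫ : ℂ).re := by
      rw [hray u huD]
      have hzero : ∀ j ∈ S', b.repr u j = 0 := by
        intro j hj
        rw [OrthonormalBasis.repr_apply_apply]
        exact (Submodule.mem_orthogonal _ _).mp huO (b j) (hmemES S' j hj)
      calc t = t * ∑ j, ‖b.repr u j‖ ^ 2 := by rw [hsum1 u hu1, mul_one]
        _ = ∑ j, t * ‖b.repr u j‖ ^ 2 := Finset.mul_sum _ _ _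
        _ ≤ ∑ j, μ j * ‖b.repr u j‖ ^ 2 := by
            refine Finset.sum_le_sum fun j _ => ?_
            by_cases hj : j ∈ S'
            · rw [hzero j hj]; simp
            · have hjt : t ≤ μ j := by
                have := hj
                simp only [S', Finset.mem_filter, Finset.mem_univ, true_and, not_lt] at this
                exact this
              exact mul_le_mul_of_nonneg_right hjt (sq_nonneg _)
    exact absurd hrt (not_lt.mpr (le_csSup_of_le
      (rrRaySet_bddAbove (hWV.trans hVd)) (rrMem_raySet huW huD hu1') hval))
  -- upper bound: build a subspace of dimension `i + 2` with Rayleigh quotients `≤ t`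
  have hj₀S' : j₀ ∉ S' := by
    simp [S', hj₀]
  let Sle : Finset (Fin n) := Finset.univ.filter fun j => μ j ≤ t
  have hsub : insert j₀ S' ⊆ Sle := by
    intro j hj
    rcases Finset.mem_insert.mp hj with rfl | hj
    · simp [Sle, hj₀]
    · simp only [S', Finset.mem_filter, Finset.mem_univ, true_and] at hj
      simp only [Sle, Finset.mem_filter, Finset.mem_univ, true_and]
      exact le_of_lt hj
  have hcard : i + 2 ≤ Sle.card := by
    have h1 := Finset.card_le_card hsub
    rw [Finset.card_insert_of_notMem hj₀S'] at h1
    omega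
  obtain ⟨S₂, hS₂sub, hS₂card⟩ := Finset.exists_subset_card_eq hcard
  have hfr₂ : Module.finrank ℂ ↥((ES S₂).map Vm.subtype) = i + 1 + 1 := by
    rw [Submodule.finrank_map_subtype_eq, hfr, hS₂card]
  refine ⟨sSup (rrRaySet A ((ES S₂).map Vm.subtype)),
    ⟨_, Submodule.map_subtype_le _ _, hfr₂, rfl⟩, ?_⟩
  have hne₂ : (ES S₂).map Vm.subtype ≠ ⊥ := by
    intro h; rw [h, finrank_bot] at hfr₂; omega
  refine csSup_le (rrRaySet_nonempty ((Submodule.map_subtype_le _ _).trans hVd) hne₂) ?_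
  rintro s ⟨ψ, hψW, hψD, hψ1, rfl⟩
  obtain ⟨w, hwES, rfl⟩ := Submodule.mem_map.mp hψW
  simp only [Submodule.subtype_apply] at hψ1 hψD ⊢
  rw [hray w hψD]
  have hz : ∀ j, j ∉ S₂ → b.repr w j = 0 := by
    intro j hj
    rw [OrthonormalBasis.repr_apply_apply]
    exact horth S₂ j hj w hwES
  have hw1 : ‖w‖ = 1 := hψ1
  calc ∑ j, μ j * ‖b.repr w j‖ ^ 2 ≤ ∑ j, t * ‖b.repr w j‖ ^ 2 := by
        refine Finset.sum_le_sum fun j _ => ?_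
        by_cases hj : j ∈ S₂
        · have hjt : μ j ≤ t := by
            have := hS₂sub hj
            simp only [Sle, Finset.mem_filter, Finset.mem_univ, true_and] at this
            exact this
          exact mul_le_mul_of_nonneg_right hjt (sq_nonneg _)
        · rw [hz j hj]; simp
    _ = t := by rw [← Finset.mul_sum, hsum1 w hw1, mul_one]

/-- No spectrum between consecutive limits of Ritz values: in the Rayleigh–Ritz setting with
the core condition (every `ψ ∈ D(A)` lies, together with `Aψ`, in some `V_k`), if the limits
`λ_i < λ_{i+1}` of the Ritz values are distinct, the open interval `(λ_i, λ_{i+1})` contains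
no point of the spectrum of `A`. -/
theorem rayleighRitz_no_spectrum_between [TopologicalSpace.SeparableSpace H]
    (A : H →ₗ.[ℂ] H) (hA : IsSelfAdjoint A)
    (hbdd : ∃ c : ℝ, ∀ ψ : A.domain, c * ‖(ψ : H)‖ ^ 2 ≤ (⟪(ψ : H), A ψ⟫).re)
    (hdisc : PurelyDiscrete A)
    (V : ℕ → Submodule ℂ H) (hmono : Monotone V)
    [∀ k, FiniteDimensional ℂ (V k)]
    (hdom : ∀ k, V k ≤ A.domain)
    (hdense : Dense (⋃ k, (V k : Set H)))
    (hcore : ∀ ψ : A.domain, ∃ k, (ψ : H) ∈ V k ∧ A ψ ∈ V k)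
    (i : ℕ) (lami lami1 : ℝ)
    (hlim : Tendsto (fun k => ritzVal A (V k) i) atTop (nhds lami))
    (hlim1 : Tendsto (fun k => ritzVal A (V k) (i + 1)) atTop (nhds lami1))
    (hlt : lami < lami1) :
    ∀ t ∈ Set.Ioo lami lami1, (t : ℂ) ∉ SpectrumP A := by
  intro t ht hspec
  obtain ⟨c, hbdd⟩ := hbdd
  have hsymm : ∀ x y : A.domain, (⟪(A x : H), (y : H)⟫ : ℂ) = ⟪(x : H), (A y : H)⟫ := by
    have hd : Dense (A.domain : Set H) := hA.dense_domain
    have h1 := LinearPMap.adjoint_isFormalAdjoint hd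
    rw [LinearPMap.isSelfAdjoint_def] at hA
    rw [hA] at h1
    exact fun x y => h1 x y
  obtain ⟨-, ⟨ψ₀, hψ₀0, hψ₀e⟩, -⟩ := hdisc _ hspec
  obtain ⟨k, hkV, -⟩ := hcore ψ₀
  by_cases hcase : ∃ m₀, i + 1 ≤ Module.finrank ℂ ↥(V m₀)
  · obtain ⟨m₀, hm₀⟩ := hcase
    have hev : ∀ᶠ m in atTop, ritzVal A (V m) i < t := hlim.eventually_lt_const ht.1
    obtain ⟨M, hM⟩ := eventually_atTop.mp hev
    set m := max (max k m₀) M with hm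
    have hφV : (ψ₀ : H) ∈ V m := hmono (le_trans (le_max_left k m₀) (le_max_left _ M)) hkV
    have hnm : i + 1 ≤ Module.finrank ℂ ↥(V m) :=
      le_trans hm₀ (Submodule.finrank_mono
        (hmono (le_trans (le_max_right k m₀) (le_max_left _ M))))
    have hlt_m : ritzVal A (V m) i < t := hM m (le_max_right _ M)
    obtain ⟨r, hr, hrle⟩ := rrKey hsymm (hdom m) hφV hψ₀0 ψ₀.2 hψ₀e hnm hlt_m
    have hle : lami1 ≤ t := by
      refine le_of_tendsto hlim1 ?_
      rw [eventually_atTop]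
      refine ⟨m, fun m' hm' => ?_⟩
      have hr' : r ∈ rrRitzSet A (V m') (i + 1) := rrRitzSet_mono (hmono hm') _ hr
      have hbb : BddBelow (rrRitzSet A (V m') (i + 1)) := rrRitzSet_bddBelow hbdd (hdom m') _
      rw [rrRitzVal_eq]
      exact le_trans (csInf_le hbb hr') hrle
    exact absurd ht.2 (not_lt.mpr hle)
  · push_neg at hcase
    have hempty : ∀ (m : ℕ) (j : ℕ), i ≤ j → ritzVal A (V m) j = 0 := by
      intro m j hj
      rw [rrRitzVal_eq]
      have h : rrRitzSet A (V m) j = ∅ := by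
        rw [Set.eq_empty_iff_forall_notMem]
        rintro r ⟨W, hWV, hWr, -⟩
        have h1 := Submodule.finrank_mono hWV
        have h2 := hcase m
        omega
      rw [h, Real.sInf_empty]
    have h0 : lami = 0 := by
      refine tendsto_nhds_unique hlim ?_
      have : (fun m => ritzVal A (V m) i) = fun _ => (0 : ℝ) :=
        funext fun m => hempty m i le_rfl
      rw [this]; exact tendsto_const_nhds
    have h1 : lami1 = 0 := by
      refine tendsto_nhds_unique hlim1 ?_
      have : (fun m => ritzVal A (V m) (i + 1)) = fun _ => (0 : ℝ) :=
        funext fun m => hempty m (i + 1) (by omega)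
      rw [this]; exact tendsto_const_nhds
    rw [h0, h1] at hlt
    exact lt_irrefl 0 hlt
end
end

section
/- Let H be a complex Hilbert space with orthonormal basis (e_n)_{n∈ℤ}, let γ, ℓ, δ > 0, and define the symmetric operator β on finitely supported vectors by β e_n = (γℓ²/(4i)) [ (μ_n + 2δ) e_{n+1} − μ_n e_{n−1} ] where μ_n = ε + 2nδ for fixed ε ∈ ℝ. Then β is essentially self-adjoint on the subspace of finitely supported vectors. -/
noncomputable section
open scoped ComplexInnerProductSpace
open Filter
open scoped ENNReal

variable {H : Type} [NormedAddCommGroup H] [InnerProductSpace ℂ H] [CompleteSpace H]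

/-- The Hilbert space `ℓ²(ℤ)`. -/
abbrev ℓ2Z : Type := lp (fun _ : ℤ => ℂ) 2

/-- The standard orthonormal basis vectors of `ℓ²(ℤ)`. -/
def eV (n : ℤ) : ℓ2Z := lp.single 2 n 1

/-- The dense subspace of finitely supported vectors. -/
def finSupp : Submodule ℂ ℓ2Z := Submodule.span ℂ (Set.range eV)

lemma dense_finSupp : Dense (finSupp : Set ℓ2Z) := by
  set b : HilbertBasis ℤ ℂ ℓ2Z := HilbertBasis.ofRepr (LinearIsometryEquiv.refl ℂ _) with hbdef
  have hb : ∀ i : ℤ, b i = eV i := fun i => by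
    rw [← b.repr_symm_single]; rfl
  have h := b.dense_span
  have hr : Set.range (b : ℤ → ℓ2Z) = Set.range eV := by
    ext x; constructor <;> rintro ⟨i, rfl⟩
    · exact ⟨i, (hb i).symm⟩
    · exact ⟨i, hb i⟩
  rw [hr] at h
  have := Submodule.dense_iff_topologicalClosure_eq_top.mpr h
  exact this

lemma harmonic_aux (b : ℕ → ℝ) (hb : Summable b) (hb0 : ∀ n, 0 ≤ b n)
    (c d t : ℝ) (ht : 0 < t) (h : ∀ᶠ n : ℕ in atTop, t ≤ (c * n + d) * b n) : False := by
  set K := |c| + |d| + 1 with hK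
  have hK0 : 0 < K := by positivity
  obtain ⟨N, hN⟩ := eventually_atTop.mp h
  have hle : ∀ n : ℕ, t / (K * (n + N + 1)) ≤ b (n + N) := by
    intro n
    have h1 := hN (n + N) (by omega)
    have hcn : c * (n + N : ℕ) + d ≤ K * ((n:ℝ) + N + 1) := by
      have h2 : ((n + N : ℕ) : ℝ) = (n:ℝ) + N := by push_cast; ring
      rw [h2]
      have hc := le_abs_self c
      have hd := le_abs_self d
      have hc' := abs_nonneg c
      have hd' := abs_nonneg d
      have hn0 : (0:ℝ) ≤ (n:ℝ) := Nat.cast_nonneg n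
      have hN0 : (0:ℝ) ≤ (N:ℝ) := Nat.cast_nonneg N
      rw [hK]
      nlinarith
    have h3 : t ≤ K * ((n:ℝ) + N + 1) * b (n + N) := by
      calc t ≤ (c * (n + N : ℕ) + d) * b (n + N) := h1
        _ ≤ K * ((n:ℝ) + N + 1) * b (n + N) := by
            apply mul_le_mul_of_nonneg_right hcn (hb0 _)
    rw [div_le_iff₀ (by positivity)]
    linarith [h3]
  have hs1 : Summable (fun n : ℕ => b (n + N)) := (summable_nat_add_iff N).2 hb
  have hs2 : Summable (fun n : ℕ => t / (K * (n + N + 1))) := by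
    apply Summable.of_nonneg_of_le (fun n => by positivity) hle hs1
  have hs3 : Summable (fun n : ℕ => 1 / ((n:ℝ) + (N + 1))) := by
    have h5 := hs2.mul_left (K / t)
    have h6 : ∀ n : ℕ, K / t * (t / (K * (n + N + 1))) = 1 / ((n:ℝ) + (N + 1)) := by
      intro n
      have hpos : (0:ℝ) < (n:ℝ) + N + 1 := by positivity
      field_simp
      ring
    simpa [h6] using h5
  have hs4 : Summable (fun n : ℕ => 1 / ((n:ℝ))) := by
    rw [← summable_nat_add_iff (N + 1)]
    convert hs3 using 2 with n
    · rfl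
    push_cast
    ring
  exact Real.not_summable_one_div_natCast hs4

lemma tridiag_step (a1 a0 r : ℝ) (A B C : ℂ)
    (h : (a1:ℂ) * A - (a0:ℂ) * B = (r:ℂ) * C) :
    a1 * (A * (starRingEnd ℂ) C).re - a0 * (C * (starRingEnd ℂ) B).re = r * ‖C‖^2 := by
  have hre := congrArg Complex.re (congrArg (· * (starRingEnd ℂ) C) h)
  simp only [sub_mul, Complex.sub_re, Complex.mul_re, Complex.mul_im, Complex.conj_re,
    Complex.conj_im, Complex.ofReal_re, Complex.ofReal_im] at hre ⊢
  have hn : ‖C‖^2 = C.re^2 + C.im^2 := by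
    rw [Complex.sq_norm, Complex.normSq_apply]; ring
  rw [hn]
  nlinarith [hre]

lemma seq_zero (δ ε r : ℝ) (hδ : 0 < δ) (hr : r ≠ 0) (u : ℤ → ℂ)
    (hsum : Summable (fun n : ℤ => ‖u n‖ ^ 2))
    (hrec : ∀ n : ℤ, ((ε + 2*((n:ℝ)+1)*δ : ℝ) : ℂ) * u (n+1)
      - ((ε + 2*(n:ℝ)*δ : ℝ) : ℂ) * u (n-1) = (r : ℂ) * u n) :
    ∀ n, u n = 0 := by
  set μ : ℤ → ℝ := fun n => ε + 2*(n:ℝ)*δ with hμ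
  set f : ℤ → ℝ := fun n => μ (n+1) * (u (n+1) * (starRingEnd ℂ) (u n)).re with hf
  -- the basic telescoping identity
  have step1 : ∀ n : ℤ, f n - f (n-1) = r * ‖u n‖^2 := by
    intro n
    have h := hrec n
    have e1 : ((n:ℝ) + 1) = (((n+1 : ℤ) : ℝ)) := by push_cast; ring
    have key := tridiag_step (μ (n+1)) (μ n) r (u (n+1)) (u (n-1)) (u n) (by
      rw [hμ]; push_cast; convert h using 3 <;> push_cast <;> ring)
    have e2 : (n - 1) + 1 = n := by ring
    have : f (n-1) = μ n * (u n * (starRingEnd ℂ) (u (n-1))).re := by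
      rw [hf]; simp only [e2]
    rw [this, hf]
    exact key
  -- summability of the pieces
  have hinj1 : Function.Injective (fun k : ℕ => (k:ℤ)+1) := fun a b hab => by
    simpa using hab
  have hinj2 : Function.Injective (fun k : ℕ => -(k:ℤ)-1) := fun a b hab => by
    simp only [neg_sub_left, neg_inj, add_left_inj, Nat.cast_inj] at hab
    omega
  have hinj0 : Function.Injective (fun k : ℕ => (k:ℤ)) := fun a b hab => by simpa using hab
  have hsp : Summable (fun k : ℕ => ‖u ((k:ℤ)+1)‖^2) := hsum.comp_injective hinj1
  have hsm : Summable (fun k : ℕ => ‖u (-(k:ℤ)-1)‖^2) := hsum.comp_injective hinj2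
  have hs0 : Summable (fun k : ℕ => ‖u ((k:ℤ))‖^2) := hsum.comp_injective hinj0
  have hsm0 : Summable (fun k : ℕ => ‖u (-(k:ℤ))‖^2) :=
    hsum.comp_injective (fun a b hab => by simp only [neg_inj, Nat.cast_inj] at hab; omega)
  -- bound sequences
  set bp : ℕ → ℝ := fun k => ‖u (k:ℤ)‖ * ‖u ((k:ℤ)+1)‖ with hbp
  set bm : ℕ → ℝ := fun k => ‖u (-(k:ℤ)-1)‖ * ‖u (-(k:ℤ))‖ with hbm
  have hbp0 : ∀ k, 0 ≤ bp k := fun k => mul_nonneg (norm_nonneg _) (norm_nonneg _)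
  have hbm0 : ∀ k, 0 ≤ bm k := fun k => mul_nonneg (norm_nonneg _) (norm_nonneg _)
  have hbps : Summable bp := by
    apply Summable.of_nonneg_of_le hbp0 (fun k => ?_) ((hs0.add hsp).mul_left (1/2))
    have := sq_nonneg (‖u (k:ℤ)‖ - ‖u ((k:ℤ)+1)‖)
    simp only [hbp]; nlinarith
  have hbms : Summable bm := by
    apply Summable.of_nonneg_of_le hbm0 (fun k => ?_) ((hsm.add hsm0).mul_left (1/2))
    have := sq_nonneg (‖u (-(k:ℤ)-1)‖ - ‖u (-(k:ℤ))‖)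
    simp only [hbm]; nlinarith
  -- telescoping: positive side
  have keyp : ∀ N : ℕ, f N = f 0 + ∑ k ∈ Finset.range N, r * ‖u ((k:ℤ)+1)‖^2 := by
    intro N
    induction N with
    | zero => simp
    | succ N ih =>
      have hstep := step1 ((N:ℤ)+1)
      have e : ((N:ℤ)+1) - 1 = N := by ring
      rw [e] at hstep
      have ecast : (((N+1 : ℕ)):ℤ) = (N:ℤ)+1 := by push_cast; ring
      rw [Finset.sum_range_succ, ecast]
      linarith [ih, hstep]
  have keym : ∀ N : ℕ, f (-(N:ℤ)-1) = f (-1) - ∑ k ∈ Finset.range N, r * ‖u (-(k:ℤ)-1)‖^2 := by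
    intro N
    induction N with
    | zero => simp
    | succ N ih =>
      have hstep := step1 (-(N:ℤ)-1)
      have e : (-(N:ℤ)-1) - 1 = -((N:ℤ)+1)-1 := by ring
      rw [e] at hstep
      have ecast : (((N+1 : ℕ)):ℤ) = (N:ℤ)+1 := by push_cast; ring
      rw [Finset.sum_range_succ, ecast]
      linarith [ih, hstep]
  -- limits
  have hTp : Tendsto (fun N : ℕ => f N) atTop
      (nhds (f 0 + ∑' k : ℕ, r * ‖u ((k:ℤ)+1)‖^2)) := by
    have hsum' : Summable (fun k : ℕ => r * ‖u ((k:ℤ)+1)‖^2) := hsp.mul_left r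
    have := hsum'.hasSum.tendsto_sum_nat
    have h2 := this.const_add (f 0)
    refine h2.congr fun N => ?_
    exact (keyp N).symm
  have hTm : Tendsto (fun N : ℕ => f (-(N:ℤ)-1)) atTop
      (nhds (f (-1) - ∑' k : ℕ, r * ‖u (-(k:ℤ)-1)‖^2)) := by
    have hsum' : Summable (fun k : ℕ => r * ‖u (-(k:ℤ)-1)‖^2) := hsm.mul_left r
    have := hsum'.hasSum.tendsto_sum_nat
    have h2 := this.const_sub (f (-1))
    refine h2.congr fun N => ?_
    exact (keym N).symm
  -- the positive-side limit vanishes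
  have limp : f 0 + ∑' k : ℕ, r * ‖u ((k:ℤ)+1)‖^2 = 0 := by
    by_contra hne
    have habs : 0 < |f 0 + ∑' k : ℕ, r * ‖u ((k:ℤ)+1)‖^2| := abs_pos.mpr hne
    have hev : ∀ᶠ N : ℕ in atTop,
        |f 0 + ∑' k : ℕ, r * ‖u ((k:ℤ)+1)‖^2| / 2 < |f (N:ℤ)| := by
      exact hTp.abs.eventually (eventually_gt_nhds (by linarith))
    have hbound : ∀ N : ℕ, |f (N:ℤ)| ≤ (2*δ*N + (|ε|+2*δ)) * bp N := by
      intro N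
      have h1 : |f (N:ℤ)| ≤ |μ ((N:ℤ)+1)| * (‖u ((N:ℤ)+1)‖ * ‖u (N:ℤ)‖) := by
        rw [hf]
        simp only [abs_mul]
        apply mul_le_mul_of_nonneg_left _ (abs_nonneg _)
        calc |(u ((N:ℤ)+1) * (starRingEnd ℂ) (u (N:ℤ))).re|
            ≤ ‖u ((N:ℤ)+1) * (starRingEnd ℂ) (u (N:ℤ))‖ := Complex.abs_re_le_norm _
          _ = ‖u ((N:ℤ)+1)‖ * ‖u (N:ℤ)‖ := by rw [norm_mul, RCLike.norm_conj]
      have h2 : |μ ((N:ℤ)+1)| ≤ 2*δ*N + (|ε|+2*δ) := by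
        rw [hμ]
        simp only []
        calc |ε + 2*(((N:ℤ)+1:ℤ):ℝ)*δ| ≤ |ε| + |2*(((N:ℤ)+1:ℤ):ℝ)*δ| := abs_add_le _ _
          _ = |ε| + 2*((N:ℝ)+1)*δ := by
              rw [abs_of_nonneg (by positivity : (0:ℝ) ≤ 2*(((N:ℤ)+1:ℤ):ℝ)*δ)]
              push_cast; ring
          _ = 2*δ*N + (|ε|+2*δ) := by ring
      calc |f (N:ℤ)| ≤ |μ ((N:ℤ)+1)| * (‖u ((N:ℤ)+1)‖ * ‖u (N:ℤ)‖) := h1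
        _ ≤ (2*δ*N + (|ε|+2*δ)) * (‖u ((N:ℤ)+1)‖ * ‖u (N:ℤ)‖) := by
            apply mul_le_mul_of_nonneg_right h2 (by positivity)
        _ = (2*δ*N + (|ε|+2*δ)) * bp N := by rw [hbp]; ring_nf
    refine harmonic_aux bp hbps hbp0 (2*δ) (|ε|+2*δ)
      (|f 0 + ∑' k : ℕ, r * ‖u ((k:ℤ)+1)‖^2| / 2) (by linarith) ?_
    filter_upwards [hev] with N hN
    exact le_trans hN.le (hbound N)
  -- the negative-side limit vanishes
  have limm : f (-1) - ∑' k : ℕ, r * ‖u (-(k:ℤ)-1)‖^2 = 0 := by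
    by_contra hne
    have habs : 0 < |f (-1) - ∑' k : ℕ, r * ‖u (-(k:ℤ)-1)‖^2| := abs_pos.mpr hne
    have hev : ∀ᶠ N : ℕ in atTop,
        |f (-1) - ∑' k : ℕ, r * ‖u (-(k:ℤ)-1)‖^2| / 2 < |f (-(N:ℤ)-1)| := by
      exact hTm.abs.eventually (eventually_gt_nhds (by linarith))
    have hbound : ∀ N : ℕ, |f (-(N:ℤ)-1)| ≤ (2*δ*N + (|ε|+2*δ)) * bm N := by
      intro N
      have e : (-(N:ℤ)-1) + 1 = -(N:ℤ) := by ring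
      have h1 : |f (-(N:ℤ)-1)| ≤ |μ (-(N:ℤ))| * (‖u (-(N:ℤ))‖ * ‖u (-(N:ℤ)-1)‖) := by
        rw [hf]
        simp only [e, abs_mul]
        apply mul_le_mul_of_nonneg_left _ (abs_nonneg _)
        calc |(u (-(N:ℤ)) * (starRingEnd ℂ) (u (-(N:ℤ)-1))).re|
            ≤ ‖u (-(N:ℤ)) * (starRingEnd ℂ) (u (-(N:ℤ)-1))‖ := Complex.abs_re_le_norm _
          _ = ‖u (-(N:ℤ))‖ * ‖u (-(N:ℤ)-1)‖ := by rw [norm_mul, RCLike.norm_conj]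
      have h2 : |μ (-(N:ℤ))| ≤ 2*δ*N + (|ε|+2*δ) := by
        rw [hμ]
        simp only []
        push_cast
        rw [abs_le]
        have h3 := le_abs_self ε
        have h4 := neg_abs_le ε
        have h5 : (0:ℝ) ≤ (N:ℝ) := Nat.cast_nonneg N
        constructor <;> nlinarith [hδ.le]
      calc |f (-(N:ℤ)-1)| ≤ |μ (-(N:ℤ))| * (‖u (-(N:ℤ))‖ * ‖u (-(N:ℤ)-1)‖) := h1
        _ ≤ (2*δ*N + (|ε|+2*δ)) * (‖u (-(N:ℤ))‖ * ‖u (-(N:ℤ)-1)‖) := by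
            apply mul_le_mul_of_nonneg_right h2 (by positivity)
        _ = (2*δ*N + (|ε|+2*δ)) * bm N := by rw [hbm]; ring_nf
    refine harmonic_aux bm hbms hbm0 (2*δ) (|ε|+2*δ)
      (|f (-1) - ∑' k : ℕ, r * ‖u (-(k:ℤ)-1)‖^2| / 2) (by linarith) ?_
    filter_upwards [hev] with N hN
    exact le_trans hN.le (hbound N)
  -- conclusion
  have h0 : f 0 - f (-1) = r * ‖u 0‖^2 := by
    have := step1 0
    simpa using this
  rw [tsum_mul_left] at limp limm
  set Sp := ∑' k : ℕ, ‖u ((k:ℤ)+1)‖^2 with hSp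
  set Sm := ∑' k : ℕ, ‖u (-(k:ℤ)-1)‖^2 with hSm
  have hSp0 : 0 ≤ Sp := tsum_nonneg (fun k => by positivity)
  have hSm0 : 0 ≤ Sm := tsum_nonneg (fun k => by positivity)
  have hall : Sp = 0 ∧ Sm = 0 ∧ ‖u 0‖^2 = 0 := by
    have hz : r * (Sp + Sm + ‖u 0‖^2) = 0 := by linarith
    have hz2 : Sp + Sm + ‖u 0‖^2 = 0 := by
      rcases mul_eq_zero.mp hz with h | h
      · exact absurd h hr
      · exact h
    have hu0 : 0 ≤ ‖u 0‖^2 := by positivity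
    constructor
    · linarith
    constructor <;> linarith
  obtain ⟨hSpz, hSmz, hu0z⟩ := hall
  intro n
  rcases lt_trichotomy n 0 with hn | hn | hn
  · have hk : (0:ℤ) ≤ -n-1 := by omega
    set k := (-n-1).toNat with hkdef
    have hkc : (k:ℤ) = -n-1 := Int.toNat_of_nonneg hk
    have hn' : -(k:ℤ)-1 = n := by omega
    have hle := Summable.le_tsum hsm k (fun j _ => by positivity)
    rw [hn'] at hle
    rw [← hSm] at hle
    have : ‖u n‖^2 ≤ 0 := by linarith
    have : ‖u n‖ = 0 := by nlinarith [norm_nonneg (u n)]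
    exact norm_eq_zero.mp this
  · subst hn
    have : ‖u 0‖ = 0 := by nlinarith [norm_nonneg (u 0)]
    exact norm_eq_zero.mp this
  · have hk : (0:ℤ) ≤ n-1 := by omega
    set k := (n-1).toNat with hkdef
    have hkc : (k:ℤ) = n-1 := Int.toNat_of_nonneg hk
    have hn' : (k:ℤ)+1 = n := by omega
    have hle := Summable.le_tsum hsp k (fun j _ => by positivity)
    rw [hn'] at hle
    rw [← hSp] at hle
    have : ‖u n‖^2 ≤ 0 := by linarith
    have : ‖u n‖ = 0 := by nlinarith [norm_nonneg (u n)]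
    exact norm_eq_zero.mp this

lemma graph_closure_eval (β : ℓ2Z →ₗ.[ℂ] ℓ2Z) {v w : ℓ2Z}
    (h : ∀ z : β.domain, ⟪β z, v⟫ = ⟪(z:ℓ2Z), w⟫)
    {p : ℓ2Z × ℓ2Z} (hp : p ∈ closure (β.graph : Set (ℓ2Z × ℓ2Z))) :
    ⟪p.2, v⟫ = ⟪p.1, w⟫ := by
  have hcl : IsClosed {q : ℓ2Z × ℓ2Z | ⟪q.2, v⟫ = ⟪q.1, w⟫} :=
    isClosed_eq (Continuous.inner continuous_snd continuous_const)
      (Continuous.inner continuous_fst continuous_const)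
  refine closure_minimal (fun q hq => ?_) hcl hp
  rcases (LinearPMap.mem_graph_iff β).mp hq with ⟨z, hz1, hz2⟩
  simp only [Set.mem_setOf_eq, ← hz1, ← hz2]
  exact h z

lemma eV_mem_finSupp (n : ℤ) : eV n ∈ finSupp := Submodule.subset_span ⟨n, rfl⟩

-- coordinates of eV
lemma inner_eV_right (u : ℓ2Z) (n : ℤ) : ⟪u, eV n⟫ = (starRingEnd ℂ) (u n) := by
  rw [eV, lp.inner_single_right]
  simp [RCLike.inner_apply]

lemma inner_eV_left (u : ℓ2Z) (n : ℤ) : ⟪eV n, u⟫ = u n := by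
  rw [eV, lp.inner_single_left]
  simp [RCLike.inner_apply]

lemma ker_adjoint (γ ℓ δ ε : ℝ) (hγ : 0 < γ) (hℓ : 0 < ℓ) (hδ : 0 < δ)
    (β : ℓ2Z →ₗ.[ℂ] ℓ2Z)
    (hdom : β.domain = finSupp)
    (hdense : Dense (β.domain : Set ℓ2Z))
    (hact : ∀ (n : ℤ) (hn : eV n ∈ β.domain),
      β ⟨eV n, hn⟩ = (((γ * ℓ ^ 2 : ℝ) : ℂ) / (4 * Complex.I)) •
        (((ε + 2 * (n : ℝ) * δ + 2 * δ : ℝ) : ℂ) • eV (n + 1)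
          - ((ε + 2 * (n : ℝ) * δ : ℝ) : ℂ) • eV (n - 1)))
    (s : ℝ) (hs : s = 1 ∨ s = -1)
    (u : ℓ2Z) (hu : u ∈ β.adjoint.domain)
    (heq : β.adjoint ⟨u, hu⟩ = ((s : ℂ) * Complex.I) • u) : u = 0 := by
  have hEn : ∀ n : ℤ, eV n ∈ β.domain := fun n => hdom ▸ eV_mem_finSupp n
  set A : ℝ := γ * ℓ ^ 2 with hA
  have hA0 : A ≠ 0 := by positivity
  have hs0 : s ≠ 0 := by rcases hs with h | h <;> rw [h] <;> norm_num
  set r : ℝ := 4 * s / A with hr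
  have hr0 : r ≠ 0 := by
    rw [hr]; exact div_ne_zero (by simpa using hs0) hA0
  have hrec : ∀ n : ℤ, ((ε + 2*((n:ℝ)+1)*δ : ℝ) : ℂ) * u (n+1)
      - ((ε + 2*(n:ℝ)*δ : ℝ) : ℂ) * u (n-1) = (r : ℂ) * u n := by
    intro n
    have h1 := (LinearPMap.adjoint_isFormalAdjoint (T := β) hdense) ⟨u, hu⟩ ⟨eV n, hEn n⟩
    rw [heq, hact n (hEn n)] at h1
    have hcoe : ((⟨u, hu⟩ : β.adjoint.domain) : ℓ2Z) = u := rfl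
    rw [hcoe] at h1
    rw [inner_smul_left, inner_eV_right, inner_smul_right, inner_sub_right,
      inner_smul_right, inner_smul_right, inner_eV_right, inner_eV_right] at h1
    have h2 := congrArg (starRingEnd ℂ) h1
    simp only [map_mul, map_sub, map_div₀, Complex.conj_conj, Complex.conj_I,
      Complex.conj_neg_I, map_neg, Complex.conj_ofReal, map_ofNat] at h2
    have h4I : (4:ℂ) * -Complex.I ≠ 0 := by simp [Complex.I_ne_zero]
    rw [div_mul_eq_mul_div, eq_div_iff h4I] at h2
    push_cast at h2
    -- h2 : (s:ℂ) * I * u n = (A:ℂ)/(4 * -I) * ((ε+2nδ+2δ) * u (n+1) - (ε+2nδ) * u (n-1))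
    have hcast : ((ε + 2*((n:ℝ)+1)*δ : ℝ) : ℂ) = ((ε + 2*(n:ℝ)*δ + 2*δ : ℝ) : ℂ) := by
      push_cast; ring
    rw [hcast, hr]
    push_cast
    have hI := Complex.I_sq
    have hAne : (A:ℂ) ≠ 0 := by exact_mod_cast hA0
    have hIne := Complex.I_ne_zero
    have hX : (A:ℂ) * (((ε + 2*(n:ℝ)*δ + 2*δ : ℝ):ℂ) * u (n+1)
        - ((ε + 2*(n:ℝ)*δ : ℝ):ℂ) * u (n-1)) = 4*(s:ℂ)*u n := by
      push_cast
      linear_combination (-1 : ℂ) * h2 + (-4*(s:ℂ)* (u n : ℂ)) * hI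
    push_cast at hX
    field_simp
    linear_combination hX
  have hsum : Summable (fun n : ℤ => ‖u n‖ ^ 2) := by
    have h3 := (lp.memℓp u).summable (by simp : 0 < (2:ℝ≥0∞).toReal)
    refine h3.congr fun n => ?_
    rw [show ((2:ℝ≥0∞).toReal) = ((2:ℕ):ℝ) by simp, Real.rpow_natCast]
  have hz := seq_zero δ ε r hδ hr0 u hsum hrec
  apply lp.ext
  funext n
  rw [hz n]
  simp

set_option maxHeartbeats 2000000 in
/-- The polymer operator `β` corresponding to `p_b sin(δ_b b)`: the symmetric tridiagonal
operator `β e_n = (γℓ²/(4i))[(μ_n + 2δ) e_{n+1} − μ_n e_{n−1}]`, `μ_n = ε + 2nδ`, on the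
finitely supported vectors of `ℓ²(ℤ)`, is essentially self-adjoint. -/
theorem beta_essentially_selfAdjoint
    (γ ℓ δ ε : ℝ) (hγ : 0 < γ) (hℓ : 0 < ℓ) (hδ : 0 < δ)
    (β : ℓ2Z →ₗ.[ℂ] ℓ2Z)
    (hdom : β.domain = finSupp)
    (hsym : ∀ x y : β.domain, ⟪β x, (y : ℓ2Z)⟫ = ⟪(x : ℓ2Z), β y⟫)
    (hact : ∀ (n : ℤ) (hn : eV n ∈ β.domain),
      β ⟨eV n, hn⟩ = (((γ * ℓ ^ 2 : ℝ) : ℂ) / (4 * Complex.I)) •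
        (((ε + 2 * (n : ℝ) * δ + 2 * δ : ℝ) : ℂ) • eV (n + 1)
          - ((ε + 2 * (n : ℝ) * δ : ℝ) : ℂ) • eV (n - 1))) :
    IsSelfAdjoint β.closure := by
  have hdense : Dense (β.domain : Set ℓ2Z) := by rw [hdom]; exact dense_finSupp
  have hEn : ∀ n : ℤ, eV n ∈ β.domain := fun n => hdom ▸ eV_mem_finSupp n
  -- closability
  have hclosable : β.IsClosable := by
    refine ⟨(β.graph.topologicalClosure).toLinearPMap, Eq.symm ?_⟩
    apply Submodule.toLinearPMap_graph_eq
    rintro ⟨x, y⟩ hxy hx0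
    have hmem : (x, y) ∈ closure (β.graph : Set (ℓ2Z × ℓ2Z)) := by
      rwa [← SetLike.mem_coe, Submodule.topologicalClosure_coe] at hxy
    simp only at hx0
    apply lp.ext; funext n
    have h := graph_closure_eval β (fun z => hsym z ⟨eV n, hEn n⟩) hmem
    have h' : ⟪y, eV n⟫ = ⟪x, β ⟨eV n, hEn n⟩⟫ := h
    rw [hx0, inner_zero_left, inner_eV_right] at h'
    have : y n = 0 := by
      have := congrArg (starRingEnd ℂ) h'
      simpa using this
    rw [this]; simp
  -- closure evaluation lemma
  have hTgraphmem : ∀ x : β.closure.domain, ((x:ℓ2Z), β.closure x) ∈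
      closure (β.graph : Set (ℓ2Z × ℓ2Z)) := by
    intro x
    have h := β.closure.mem_graph x
    rw [← hclosable.graph_closure_eq_closure_graph, ← SetLike.mem_coe,
      Submodule.topologicalClosure_coe] at h
    exact h
  have closure_eval : ∀ {v w : ℓ2Z}, (∀ z : β.domain, ⟪β z, v⟫ = ⟪(z:ℓ2Z), w⟫) →
      ∀ x : β.closure.domain, ⟪β.closure x, v⟫ = ⟪(x:ℓ2Z), w⟫ :=
    fun h x => graph_closure_eval β h (hTgraphmem x)
  -- closure ≤ adjoint
  have hTle : β.closure ≤ β.adjoint := by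
    refine ⟨fun y hy => ?_, fun x y' hxy => ?_⟩
    · exact LinearPMap.mem_adjoint_domain_of_exists _
        ⟨β.closure ⟨y, hy⟩, fun z => closure_eval (fun z' => hsym z' z) ⟨y, hy⟩⟩
    · refine (LinearPMap.adjoint_apply_eq hdense y' (fun z => ?_)).symm
      rw [closure_eval (fun z' => hsym z' z) x, hxy]
  have hβT : β ≤ β.closure := β.le_closure
  have hTdense : Dense (β.closure.domain : Set ℓ2Z) :=
    Dense.mono hβT.1 hdense
  -- symmetry of the closure
  have Tsym : β.closure.IsFormalAdjoint β.closure := by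
    intro x y
    have hy : (y:ℓ2Z) ∈ β.adjoint.domain := hTle.1 y.2
    have hval : β.adjoint ⟨(y:ℓ2Z), hy⟩ = β.closure y := (hTle.2 rfl).symm
    have hprop : ∀ z : β.domain, ⟪β z, (y:ℓ2Z)⟫ = ⟪(z:ℓ2Z), β.closure y⟫ := by
      intro z
      have h := (LinearPMap.adjoint_isFormalAdjoint (T := β) hdense) ⟨(y:ℓ2Z), hy⟩ z
      rw [hval] at h
      calc ⟪β z, (y:ℓ2Z)⟫ = (starRingEnd ℂ) ⟪(y:ℓ2Z), β z⟫ := (inner_conj_symm _ _).symm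
        _ = (starRingEnd ℂ) ⟪β.closure y, (z:ℓ2Z)⟫ := by rw [h]
        _ = ⟪(z:ℓ2Z), β.closure y⟫ := inner_conj_symm _ _
    exact closure_eval hprop x
  -- the kernel of the adjoint at ±i is trivial
  have hker := ker_adjoint γ ℓ δ ε hγ hℓ hδ β hdom hdense hact
  -- the operator g = closure - i
  set g : β.closure.domain →ₗ[ℂ] ℓ2Z :=
    β.closure.toFun - (Complex.I • (β.closure.domain.subtype)) with hgdef
  have hg_apply : ∀ z : β.closure.domain, g z = β.closure z - Complex.I • (z:ℓ2Z) :=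
    fun z => rfl
  -- norm estimate
  have hest : ∀ z : β.closure.domain, ‖(z:ℓ2Z)‖ ≤ ‖g z‖ := by
    intro z
    have hreal : (⟪β.closure z, (z:ℓ2Z)⟫).im = 0 := by
      rw [← Complex.conj_eq_iff_im]
      calc (starRingEnd ℂ) ⟪β.closure z, (z:ℓ2Z)⟫ = ⟪(z:ℓ2Z), β.closure z⟫ :=
        inner_conj_symm _ _
        _ = ⟪β.closure z, (z:ℓ2Z)⟫ := (Tsym z z).symm
    have hnorm : ‖g z‖^2 = ‖β.closure z‖^2 + ‖(z:ℓ2Z)‖^2 := by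
      rw [hg_apply]
      rw [norm_sub_sq (𝕜 := ℂ)]
      rw [inner_smul_right]
      have hre : RCLike.re (Complex.I * ⟪β.closure z, (z:ℓ2Z)⟫) = 0 := by
        simp [Complex.mul_re, hreal]
      rw [hre]
      rw [norm_smul]
      simp
    have h2 : ‖(z:ℓ2Z)‖^2 ≤ ‖g z‖^2 := by
      rw [hnorm]; nlinarith [sq_nonneg (‖β.closure z‖)]
    exact (pow_le_pow_iff_left₀ (norm_nonneg _) (norm_nonneg _) two_ne_zero).mp h2
  -- the range of g is closed
  have hKclosed : IsClosed ((LinearMap.range g : Submodule ℂ ℓ2Z) : Set ℓ2Z) := by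
    apply IsSeqClosed.isClosed
    intro w p hw hwp
    choose z hz using hw
    have hdist : ∀ m n : ℕ, dist ((z m : ℓ2Z)) ((z n : ℓ2Z)) ≤ dist (w m) (w n) := by
      intro m n
      rw [dist_eq_norm, dist_eq_norm]
      have h1 : (z m : ℓ2Z) - (z n : ℓ2Z) = ((z m - z n : β.closure.domain) : ℓ2Z) := rfl
      rw [h1]
      calc ‖((z m - z n : β.closure.domain) : ℓ2Z)‖ ≤ ‖g (z m - z n)‖ := hest _
        _ = ‖w m - w n‖ := by rw [map_sub, hz m, hz n]
    have hcauchy : CauchySeq (fun n => ((z n : ℓ2Z))) := by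
      rw [Metric.cauchySeq_iff]
      intro ε' hε'
      obtain ⟨N, hN⟩ := Metric.cauchySeq_iff.mp hwp.cauchySeq ε' hε'
      exact ⟨N, fun m hm n hn => lt_of_le_of_lt (hdist m n) (hN m hm n hn)⟩
    obtain ⟨x, hx⟩ := cauchySeq_tendsto_of_complete hcauchy
    have hTz : Filter.Tendsto (fun n => β.closure (z n)) Filter.atTop
        (nhds (p + Complex.I • x)) := by
      have heq : ∀ n, β.closure (z n) = w n + Complex.I • ((z n : ℓ2Z)) := by
        intro n
        have := hz n
        rw [hg_apply] at this
        linear_combination (norm := module) this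
      exact (hwp.add ((hx.const_smul Complex.I))).congr (fun n => (heq n).symm)
    have hpair : Filter.Tendsto (fun n => (((z n):ℓ2Z), β.closure (z n))) Filter.atTop
        (nhds (x, p + Complex.I • x)) := hx.prodMk_nhds hTz
    have hmemgraph : (x, p + Complex.I • x) ∈ β.closure.graph := by
      have hcl : _root_.IsClosed (β.closure.graph : Set (ℓ2Z × ℓ2Z)) := hclosable.closure_isClosed
      exact hcl.mem_of_tendsto hpair (Filter.Eventually.of_forall fun n => β.closure.mem_graph (z n))
    have hxdom : x ∈ β.closure.domain := LinearPMap.mem_domain_of_mem_graph hmemgraph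
    have hval : β.closure ⟨x, hxdom⟩ = p + Complex.I • x :=
      ((LinearPMap.image_iff hxdom).mpr hmemgraph).symm
    refine ⟨⟨x, hxdom⟩, ?_⟩
    rw [hg_apply, hval]
    module
  -- the orthogonal complement of the range is trivial
  have horto : (LinearMap.range g)ᗮ = ⊥ := by
    rw [Submodule.eq_bot_iff]
    intro v hv
    have hprop : ∀ z : β.domain, ⟪((-Complex.I) • v : ℓ2Z), (z:ℓ2Z)⟫ = ⟪v, β z⟫ := by
      intro z
      have hz' : (z:ℓ2Z) ∈ β.closure.domain := hβT.1 z.2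
      have hzval : β.closure ⟨(z:ℓ2Z), hz'⟩ = β z := (hβT.2 rfl).symm
      have hg0 : ⟪β z - Complex.I • (z:ℓ2Z), v⟫ = 0 := by
        have := hv (g ⟨(z:ℓ2Z), hz'⟩) (LinearMap.mem_range_self g _)
        rwa [hg_apply, hzval] at this
      have h1 : ⟪β z, v⟫ = ⟪Complex.I • ((z:ℓ2Z)), v⟫ := by
        rw [inner_sub_left] at hg0
        exact sub_eq_zero.mp hg0
      calc ⟪((-Complex.I) • v : ℓ2Z), (z:ℓ2Z)⟫
          = Complex.I * ⟪v, (z:ℓ2Z)⟫ := by rw [inner_smul_left]; simp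
        _ = (starRingEnd ℂ) (⟪Complex.I • ((z:ℓ2Z)), v⟫) := by
            rw [inner_smul_left, map_mul]
            simp [inner_conj_symm]
        _ = (starRingEnd ℂ) ⟪β z, v⟫ := by rw [h1]
        _ = ⟪v, β z⟫ := inner_conj_symm _ _
    have hvmem : v ∈ β.adjoint.domain :=
      LinearPMap.mem_adjoint_domain_of_exists _ ⟨(-Complex.I) • v, hprop⟩
    have hvadj : β.adjoint ⟨v, hvmem⟩ = (-Complex.I) • v :=
      LinearPMap.adjoint_apply_eq hdense _ hprop
    refine hker (-1) (Or.inr rfl) v hvmem ?_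
    rw [hvadj]
    norm_num
  -- surjectivity of g
  have hsurj : ∀ wv : ℓ2Z, ∃ z : β.closure.domain,
      β.closure z - Complex.I • (z:ℓ2Z) = wv := by
    intro wv
    haveI : CompleteSpace (LinearMap.range g : Submodule ℂ ℓ2Z) :=
      hKclosed.completeSpace_coe
    have hKtop : (LinearMap.range g) = ⊤ := Submodule.orthogonal_eq_bot_iff.mp horto
    have : wv ∈ LinearMap.range g := by rw [hKtop]; trivial
    obtain ⟨z, hz⟩ := this
    exact ⟨z, by rw [← hg_apply]; exact hz⟩
  -- adjoint ≤ closure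
  have hcore : ∀ y : β.adjoint.domain, ∃ z : β.closure.domain,
      (z:ℓ2Z) = (y:ℓ2Z) ∧ β.closure z = β.adjoint y := by
    intro y
    obtain ⟨z, hz⟩ := hsurj (β.adjoint y - Complex.I • (y:ℓ2Z))
    have hzadj : (z:ℓ2Z) ∈ β.adjoint.domain := hTle.1 z.2
    have hzval : β.adjoint ⟨(z:ℓ2Z), hzadj⟩ = β.closure z := (hTle.2 rfl).symm
    set d : β.adjoint.domain := y - ⟨(z:ℓ2Z), hzadj⟩ with hd
    have hdcoe : ((d : ℓ2Z)) = (y:ℓ2Z) - (z:ℓ2Z) := rfl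
    have hdval : β.adjoint d = (((1:ℝ):ℂ) * Complex.I) • ((d : ℓ2Z)) := by
      rw [hd, β.adjoint.map_sub, hzval]
      rw [show ((y - ⟨(z:ℓ2Z), hzadj⟩ : β.adjoint.domain) : ℓ2Z) = (y:ℓ2Z) - (z:ℓ2Z) from rfl]
      have hcz : β.closure z = β.adjoint y - Complex.I • (y:ℓ2Z) + Complex.I • (z:ℓ2Z) := by
        linear_combination (norm := module) hz
      rw [hcz]
      push_cast
      module
    have hdzero : ((d : ℓ2Z)) = 0 := hker 1 (Or.inl rfl) _ d.2 (by
      convert hdval using 2 <;> norm_num)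
    have hyz : (y:ℓ2Z) = (z:ℓ2Z) := by
      rw [hdcoe] at hdzero
      exact sub_eq_zero.mp hdzero
    refine ⟨z, hyz.symm, ?_⟩
    rw [← hzval]
    congr 1
    exact Subtype.ext hyz.symm
  have hadjle : β.adjoint ≤ β.closure := by
    refine ⟨fun y hy => ?_, fun x y' hxy => ?_⟩
    · obtain ⟨z, hz1, hz2⟩ := hcore ⟨y, hy⟩
      rw [show y = (z:ℓ2Z) from hz1.symm]
      exact z.2
    · obtain ⟨z, hz1, hz2⟩ := hcore x
      have : y' = z := Subtype.ext (by rw [← hxy, hz1])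
      rw [this, hz2]
  -- conclude
  rw [LinearPMap.isSelfAdjoint_def]
  apply le_antisymm
  · have h1 : (β.closure.adjoint).IsFormalAdjoint β := by
      intro x z
      have h := (LinearPMap.adjoint_isFormalAdjoint (T := β.closure) hTdense) x
        ⟨(z:ℓ2Z), hβT.1 z.2⟩
      rwa [← hβT.2 (rfl : (z:ℓ2Z) = ((⟨(z:ℓ2Z), hβT.1 z.2⟩ : β.closure.domain) : ℓ2Z))] at h
    exact le_trans (h1.symm.le_adjoint hdense) hadjle
  · exact Tsym.le_adjoint hTdense
end
end

section
/- On the dense domain D of finitely supported vectors in ℓ²(ℤ), the norm ‖ψ‖_m := √(T_m(ψ,ψ) + (L²m²γ² + 1)‖ψ‖²), where T_m(ψ,ψ) = ⟨ψ, h^{(m)}ψ⟩, is equivalent to the norm ‖ψ‖_+ := √(⟨ψ, p²ψ⟩ + ‖ψ‖²): there exist constants 0 < c ≤ C with c‖ψ‖_+ ≤ ‖ψ‖_m ≤ C‖ψ‖_+ for all ψ ∈ D. -/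
noncomputable section
open scoped ComplexInnerProductSpace
open Filter
open scoped ENNReal

set_option maxHeartbeats 1000000

variable {H : Type} [NormedAddCommGroup H] [InnerProductSpace ℂ H] [CompleteSpace H]

lemma memℓp_shift (a : ℤ) (f : ℓ2Z) : Memℓp (fun k => f (k - a)) (2 : ℝ≥0∞) := by
  apply memℓp_gen
  have hf := lp.memℓp f
  rw [memℓp_gen_iff (p := (2 : ℝ≥0∞)) (by norm_num)] at hf
  exact ((Equiv.subRight a).summable_iff).2 hf

def shiftF (f : ℓ2Z) : ℓ2Z := ⟨fun k => f (k - 1), memℓp_shift 1 f⟩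
def shiftB (f : ℓ2Z) : ℓ2Z := ⟨fun k => f (k + 1), by have hm := memℓp_shift (-1) f; simp only [sub_neg_eq_add] at hm; exact hm⟩

lemma shiftF_apply (f : ℓ2Z) (k : ℤ) : (shiftF f : ∀ _ : ℤ, ℂ) k = f (k - 1) := rfl
lemma shiftB_apply (f : ℓ2Z) (k : ℤ) : (shiftB f : ∀ _ : ℤ, ℂ) k = f (k + 1) := rfl

def shiftE : ℓ2Z ≃ₗ[ℂ] ℓ2Z where
  toFun := shiftF
  invFun := shiftB
  map_add' f g := by ext k; simp [shiftF_apply, lp.coeFn_add, Pi.add_apply]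
  map_smul' c f := by ext k; simp [shiftF_apply, lp.coeFn_smul, Pi.smul_apply]
  left_inv f := by ext k; simp [shiftF_apply, shiftB_apply]
  right_inv f := by ext k; simp [shiftF_apply, shiftB_apply]

def shiftL : ℓ2Z ≃ₗᵢ[ℂ] ℓ2Z :=
{ shiftE with
  norm_map' := fun f => by
    show ‖shiftF f‖ = ‖f‖
    rw [lp.norm_eq_tsum_rpow (by norm_num) (shiftF f), lp.norm_eq_tsum_rpow (by norm_num) f]
    congr 1
    exact (Equiv.subRight (1:ℤ)).tsum_eq (fun j => ‖f j‖ ^ (2 : ℝ≥0∞).toReal) }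

lemma eV_apply (n k : ℤ) : (eV n : ∀ _ : ℤ, ℂ) k = if k = n then 1 else 0 := by
  rw [eV, lp.single_apply]
  split_ifs with h
  · subst h; simp
  · simp [h]

lemma shiftL_eV (n : ℤ) : shiftL (eV n) = eV (n + 1) := by
  ext k
  show (eV n : ∀ _ : ℤ, ℂ) (k - 1) = _
  rw [eV_apply, eV_apply]
  simp [sub_eq_iff_eq_add]

lemma shiftL_symm_eV (n : ℤ) : shiftL.symm (eV n) = eV (n - 1) := by
  have h := shiftL_eV (n - 1)
  rw [sub_add_cancel] at h
  rw [← h, LinearIsometryEquiv.symm_apply_apply]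

lemma inner_eV (m n : ℤ) : ⟪eV m, eV n⟫ = if m = n then (1:ℂ) else 0 := by
  rw [eV, lp.inner_single_left]
  simp only [RCLike.inner_apply, map_one, one_mul]
  rw [eV_apply, mul_one]
lemma sq_add_bound {a b c : ℝ} (hb : 0 ≤ b) (hc : 0 ≤ c) (h : a ≤ b + c) (ha : 0 ≤ a) :
    a ^ 2 ≤ 2 * b ^ 2 + 2 * c ^ 2 := by nlinarith [sq_nonneg (b - c)]

lemma quad_identity {E : Type} [NormedAddCommGroup E] [InnerProductSpace ℂ E]
    (u v w : E) (L γ m δ t : ℝ) (hδ : 0 < δ) :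
    (((2 * L * γ * m / δ : ℝ) : ℂ) * ⟪w, u⟫ + ((1 / δ ^ 2 : ℝ) : ℂ) * ⟪u, u⟫
      + ((γ ^ 2 : ℝ) : ℂ) * (⟪v, v⟫ - ((2 * t : ℝ) : ℂ) * ⟪w, v⟫ + ((t ^ 2 : ℝ) : ℂ) * ⟪w, w⟫)).re
      + (L ^ 2 * m ^ 2 * γ ^ 2 + 1) * ‖w‖ ^ 2
    = ‖((δ⁻¹ : ℝ) : ℂ) • u + ((L * γ * m : ℝ) : ℂ) • w‖ ^ 2
      + γ ^ 2 * ‖v - ((t : ℝ) : ℂ) • w‖ ^ 2 + ‖w‖ ^ 2 := by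
  have h1 := norm_add_sq (𝕜 := ℂ) (((δ⁻¹ : ℝ) : ℂ) • u) (((L * γ * m : ℝ) : ℂ) • w)
  have h2 := norm_sub_sq (𝕜 := ℂ) v (((t : ℝ) : ℂ) • w)
  rw [h1, h2]
  simp only [inner_smul_left, inner_smul_right, norm_smul, Complex.norm_real,
    Complex.conj_ofReal, Complex.add_re, Complex.sub_re, Complex.mul_re,
    Complex.ofReal_re, Complex.ofReal_im, RCLike.re_to_complex,
    Real.norm_eq_abs, abs_of_pos (inv_pos.2 hδ), mul_pow, sq_abs]
  have e1 : (⟪u, u⟫ : ℂ).re = ‖u‖ ^ 2 := by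
    simpa using inner_self_eq_norm_sq (𝕜 := ℂ) u
  have e2 : (⟪v, v⟫ : ℂ).re = ‖v‖ ^ 2 := by
    simpa using inner_self_eq_norm_sq (𝕜 := ℂ) v
  have e3 : (⟪w, w⟫ : ℂ).re = ‖w‖ ^ 2 := by
    simpa using inner_self_eq_norm_sq (𝕜 := ℂ) w
  have e4 : (⟪w, u⟫ : ℂ).re = (⟪u, w⟫ : ℂ).re := by
    simpa using inner_re_symm (𝕜 := ℂ) w u
  have e5 : (⟪w, v⟫ : ℂ).re = (⟪v, w⟫ : ℂ).re := by
    simpa using inner_re_symm (𝕜 := ℂ) w v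
  rw [e1, e2, e3, e4, e5]
  field_simp
  ring

/-- Norm equivalence: on the finitely supported vectors, the form norm
`‖ψ‖_m = √(⟨ψ, h^{(m)}ψ⟩ + (L²m²γ² + 1)‖ψ‖²)` is equivalent to
`‖ψ‖₊ = √(⟨ψ, p²ψ⟩ + ‖ψ‖²) = √(‖pψ‖² + ‖ψ‖²)`. -/
theorem form_norm_equivalence
    (γ ℓ δ ε L m b₀ : ℝ) (hγ : 0 < γ) (hℓ : 0 < ℓ) (hδ : 0 < δ) (hL : 0 < L)
    (β : ℓ2Z →ₗ.[ℂ] ℓ2Z)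
    (hdomβ : β.domain = finSupp)
    (hactβ : ∀ (n : ℤ) (hn : eV n ∈ β.domain),
      β ⟨eV n, hn⟩ = (((γ * ℓ ^ 2 : ℝ) : ℂ) / (4 * Complex.I)) •
        (((ε + 2 * (n : ℝ) * δ + 2 * δ : ℝ) : ℂ) • eV (n + 1)
          - ((ε + 2 * (n : ℝ) * δ : ℝ) : ℂ) • eV (n - 1)))
    (h : ℓ2Z →ₗ.[ℂ] ℓ2Z)
    (hdomh : h.domain = finSupp)
    (hsymh : ∀ x y : h.domain, ⟪h x, (y : ℓ2Z)⟫ = ⟪(x : ℓ2Z), h y⟫)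
    (hacth : ∀ (n : ℤ) (hn : eV n ∈ h.domain) (h1 : eV n ∈ β.domain)
        (h2 : β ⟨eV n, h1⟩ ∈ β.domain),
      h ⟨eV n, hn⟩ = ((2 * L * γ * m / δ : ℝ) : ℂ) • β ⟨eV n, h1⟩
        + ((1 / δ ^ 2 : ℝ) : ℂ) • β ⟨β ⟨eV n, h1⟩, h2⟩
        + ((γ ^ 2 * (γ * ℓ ^ 2 / 2 * (ε + 2 * (n : ℝ) * δ) - γ * ℓ ^ 2 * b₀) ^ 2 : ℝ) : ℂ)
            • eV n)
    (p : ℓ2Z →ₗ.[ℂ] ℓ2Z)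
    (hdomp : p.domain = finSupp)
    (hactp : ∀ (n : ℤ) (hn : eV n ∈ p.domain),
      p ⟨eV n, hn⟩ = ((γ * ℓ ^ 2 / 2 * (ε + 2 * (n : ℝ) * δ) : ℝ) : ℂ) • eV n)
    (hle : h.domain ≤ p.domain) :
    ∃ c C : ℝ, 0 < c ∧ c ≤ C ∧ ∀ ψ : h.domain,
      c * Real.sqrt (‖p ⟨(ψ : ℓ2Z), hle ψ.2⟩‖ ^ 2 + ‖(ψ : ℓ2Z)‖ ^ 2)
          ≤ Real.sqrt ((⟪(ψ : ℓ2Z), h ψ⟫).re + (L ^ 2 * m ^ 2 * γ ^ 2 + 1) * ‖(ψ : ℓ2Z)‖ ^ 2) ∧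
      Real.sqrt ((⟪(ψ : ℓ2Z), h ψ⟫).re + (L ^ 2 * m ^ 2 * γ ^ 2 + 1) * ‖(ψ : ℓ2Z)‖ ^ 2)
          ≤ C * Real.sqrt (‖p ⟨(ψ : ℓ2Z), hle ψ.2⟩‖ ^ 2 + ‖(ψ : ℓ2Z)‖ ^ 2) := by
  classical
  let q : ℤ → ℝ := fun n => γ * ℓ ^ 2 / 2 * (ε + 2 * (n : ℝ) * δ)
  have hqval : ∀ n : ℤ, q n = γ * ℓ ^ 2 / 2 * (ε + 2 * (n : ℝ) * δ) := fun _ => rfl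
  let t : ℝ := γ * ℓ ^ 2 * b₀
  have htval : t = γ * ℓ ^ 2 * b₀ := rfl
  -- basic linear maps restricted to finSupp
  let Bmap : finSupp →ₗ[ℂ] ℓ2Z :=
    β.toFun ∘ₗ (LinearEquiv.ofEq finSupp β.domain hdomβ.symm).toLinearMap
  let Pmap : finSupp →ₗ[ℂ] ℓ2Z :=
    p.toFun ∘ₗ (LinearEquiv.ofEq finSupp p.domain hdomp.symm).toLinearMap
  let Hmap : finSupp →ₗ[ℂ] ℓ2Z :=
    h.toFun ∘ₗ (LinearEquiv.ofEq finSupp h.domain hdomh.symm).toLinearMap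
  -- generators
  let e' : ℤ → finSupp := fun n => ⟨eV n, Submodule.subset_span ⟨n, rfl⟩⟩
  have ind : ∀ (Q : finSupp → Prop), (∀ n, Q (e' n)) → Q 0 →
      (∀ x y, Q x → Q y → Q (x + y)) → (∀ (c : ℂ) x, Q x → Q (c • x)) → ∀ x, Q x := by
    intro Q hgen h0 hadd hsmul x
    have hx : x ∈ Submodule.span ℂ ((Subtype.val) ⁻¹' (Set.range eV) : Set finSupp) := by
      exact (Submodule.eq_top_iff'.1 (Submodule.span_span_coe_preimage (R := ℂ) (s := Set.range eV))) x
    induction hx using Submodule.span_induction with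
    | mem u hu =>
      obtain ⟨n, hn⟩ := hu
      have : u = e' n := Subtype.ext hn.symm
      exact this ▸ hgen n
    | zero => exact h0
    | add a b _ _ iha ihb => exact hadd a b iha ihb
    | smul c a _ iha => exact hsmul c a iha

  -- action on basis vectors
  have hP : ∀ n : ℤ, Pmap (e' n) = ((q n : ℝ) : ℂ) • eV n := by
    intro n
    have hx' : eV n ∈ p.domain := hdomp.symm ▸ (e' n).2
    show p.toFun _ = _
    have : p.toFun ⟨eV n, hx'⟩ = ((q n : ℝ) : ℂ) • eV n := hactp n hx'
    exact this
  have hB : ∀ n : ℤ, Bmap (e' n)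
      = (2 * Complex.I)⁻¹ • (((q (n + 1) : ℝ) : ℂ) • eV (n + 1) - ((q n : ℝ) : ℂ) • eV (n - 1)) := by
    intro n
    have hx' : eV n ∈ β.domain := hdomβ.symm ▸ (e' n).2
    have h0 : Bmap (e' n) = β ⟨eV n, hx'⟩ := rfl
    rw [h0, hactβ n hx']
    have h4I : (4 * Complex.I) ≠ 0 := by simp [Complex.I_ne_zero]
    have h2I : (2 * Complex.I) ≠ 0 := by simp [Complex.I_ne_zero]
    have c1 : ((γ * ℓ ^ 2 : ℝ) : ℂ) / (4 * Complex.I) * ((ε + 2 * (n : ℝ) * δ + 2 * δ : ℝ) : ℂ)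
        = (2 * Complex.I)⁻¹ * ((q (n + 1) : ℝ) : ℂ) := by
      rw [hqval]; push_cast; rw [div_mul_eq_mul_div, inv_mul_eq_div, div_eq_div_iff h4I h2I]; ring
    have c2 : ((γ * ℓ ^ 2 : ℝ) : ℂ) / (4 * Complex.I) * ((ε + 2 * (n : ℝ) * δ : ℝ) : ℂ)
        = (2 * Complex.I)⁻¹ * ((q n : ℝ) : ℂ) := by
      rw [hqval]; push_cast; rw [div_mul_eq_mul_div, inv_mul_eq_div, div_eq_div_iff h4I h2I]; ring
    rw [smul_sub, smul_sub, smul_smul, smul_smul, smul_smul, smul_smul, c1, c2]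
  -- B and P map finSupp into itself
  have Bmem : ∀ x : finSupp, Bmap x ∈ finSupp := by
    refine ind _ (fun n => ?_) (by simp) (fun x y hx hy => ?_) (fun c x hx => ?_)
    · rw [hB n]
      exact Submodule.smul_mem _ _ (Submodule.sub_mem _
        (Submodule.smul_mem _ _ (Submodule.subset_span ⟨n + 1, rfl⟩))
        (Submodule.smul_mem _ _ (Submodule.subset_span ⟨n - 1, rfl⟩)))
    · rw [map_add]; exact Submodule.add_mem _ hx hy
    · rw [map_smul]; exact Submodule.smul_mem _ _ hx
  have Pmem : ∀ x : finSupp, Pmap x ∈ finSupp := by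
    refine ind _ (fun n => ?_) (by simp) (fun x y hx hy => ?_) (fun c x hx => ?_)
    · rw [hP n]
      exact Submodule.smul_mem _ _ (Submodule.subset_span ⟨n, rfl⟩)
    · rw [map_add]; exact Submodule.add_mem _ hx hy
    · rw [map_smul]; exact Submodule.smul_mem _ _ hx
  have Smem : ∀ x : finSupp, shiftL (x : ℓ2Z) ∈ finSupp := by
    refine ind _ (fun n => ?_) (by simp) (fun x y hx hy => ?_) (fun c x hx => ?_)
    · show shiftL (eV n) ∈ finSupp
      rw [shiftL_eV]; exact Submodule.subset_span ⟨n + 1, rfl⟩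
    · show shiftL ((x : ℓ2Z) + y) ∈ finSupp
      rw [map_add]; exact Submodule.add_mem _ hx hy
    · show shiftL (c • (x : ℓ2Z)) ∈ finSupp
      rw [map_smul]; exact Submodule.smul_mem _ _ hx
  let B : finSupp →ₗ[ℂ] finSupp := LinearMap.codRestrict finSupp Bmap Bmem
  let P : finSupp →ₗ[ℂ] finSupp := LinearMap.codRestrict finSupp Pmap Pmem
  let SM : finSupp →ₗ[ℂ] finSupp := LinearMap.codRestrict finSupp
    (shiftL.toLinearEquiv.toLinearMap ∘ₗ finSupp.subtype) Smem
  have hBcoe : ∀ x : finSupp, ((B x : finSupp) : ℓ2Z) = Bmap x := fun _ => rfl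
  have hPcoe : ∀ x : finSupp, ((P x : finSupp) : ℓ2Z) = Pmap x := fun _ => rfl
  have hSMcoe : ∀ x : finSupp, ((SM x : finSupp) : ℓ2Z) = shiftL (x : ℓ2Z) := fun _ => rfl
  have hSMe : ∀ n : ℤ, SM (e' n) = e' (n + 1) := by
    intro n
    apply Subtype.ext
    rw [hSMcoe]
    exact shiftL_eV n
  have hPe : ∀ n : ℤ, P (e' n) = ((q n : ℝ) : ℂ) • e' n := by
    intro n
    apply Subtype.ext
    rw [hPcoe, hP n]
    rfl
  -- identity I1 : B in terms of P and shifts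
  have I1 : ∀ x : finSupp, Bmap x
      = (2 * Complex.I)⁻¹ • (Pmap (SM x) - shiftL.symm (Pmap x)) := by
    refine ind _ (fun n => ?_) (by simp) (fun x y hx hy => ?_) (fun c x hx => ?_)
    · rw [hB n, hSMe n, hP (n + 1), hP n, map_smul, shiftL_symm_eV]
    · simp only [map_add, hx, hy]; module
    · simp only [map_smul, hx]; module
  -- identity I2 : P ∘ S = S ∘ P + γℓ²δ S
  have I2 : ∀ x : finSupp, Pmap (SM x)
      = shiftL (Pmap x) + ((γ * ℓ ^ 2 * δ : ℝ) : ℂ) • shiftL (x : ℓ2Z) := by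
    refine ind _ (fun n => ?_) (by simp) (fun x y hx hy => ?_) (fun c x hx => ?_)
    · rw [hSMe n, hP (n + 1), hP n, map_smul, shiftL_eV]
      show ((q (n + 1) : ℝ) : ℂ) • eV (n + 1) = _
      have : q (n + 1) = q n + γ * ℓ ^ 2 * δ := by rw [hqval, hqval]; push_cast; ring
      rw [this]; push_cast; module
    · simp only [Submodule.coe_add, map_add, hx, hy]; module
    · simp only [Submodule.coe_smul, map_smul, hx]; module
  have eco : ∀ n : ℤ, ((e' n : finSupp) : ℓ2Z) = eV n := fun _ => rfl
  -- decomposition of h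
  have E : ∀ x : finSupp, Hmap x = ((2 * L * γ * m / δ : ℝ) : ℂ) • Bmap x
      + ((1 / δ ^ 2 : ℝ) : ℂ) • Bmap (B x)
      + ((γ ^ 2 : ℝ) : ℂ) • (Pmap (P x) - ((2 * t : ℝ) : ℂ) • Pmap x
          + ((t ^ 2 : ℝ) : ℂ) • (x : ℓ2Z)) := by
    refine ind _ (fun n => ?_) (by simp) (fun x y hx hy => ?_) (fun c x hx => ?_)
    · have hn : eV n ∈ h.domain := hdomh.symm ▸ (e' n).2
      have h1 : eV n ∈ β.domain := hdomβ.symm ▸ (e' n).2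
      have h2 : β ⟨eV n, h1⟩ ∈ β.domain := by simp only [hdomβ]; exact Bmem (e' n)
      have happ : Hmap (e' n) = h ⟨eV n, hn⟩ := rfl
      have r1 : β ⟨eV n, h1⟩ = Bmap (e' n) := rfl
      have r2 : β ⟨β ⟨eV n, h1⟩, h2⟩ = Bmap (B (e' n)) := rfl
      rw [happ, hacth n hn h1 h2, r2, r1]
      have hPP : Pmap (P (e' n)) = ((q n * q n : ℝ) : ℂ) • eV n := by
        rw [hPe n, map_smul, hP n, smul_smul]; norm_cast
      rw [hPP, hP n]
      simp only [eco, hqval, htval]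
      push_cast
      module
    · simp only [Submodule.coe_add, map_add, hx, hy]; module
    · simp only [Submodule.coe_smul, map_smul, hx]; module
  -- symmetry of P
  have Psym : ∀ x y : finSupp, ⟪Pmap x, (y : ℓ2Z)⟫ = ⟪(x : ℓ2Z), Pmap y⟫ := by
    refine ind (fun x => ∀ y : finSupp, ⟪Pmap x, (y : ℓ2Z)⟫ = ⟪(x : ℓ2Z), Pmap y⟫)
      (fun nx => ?_) (by simp) (fun x y hx hy => ?_) (fun c x hx => ?_)
    · refine ind (fun y => ⟪Pmap (e' nx), (y : ℓ2Z)⟫ = ⟪((e' nx : finSupp) : ℓ2Z), Pmap y⟫)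
        (fun ny => ?_) (by simp) (fun x y hx hy => ?_) (fun c x hx => ?_)
      · show ⟪Pmap (e' nx), ((e' ny : finSupp) : ℓ2Z)⟫ = ⟪((e' nx : finSupp) : ℓ2Z), Pmap (e' ny)⟫
        rw [hP nx, hP ny]
        simp only [eco]
        rw [inner_smul_left, inner_smul_right, inner_eV, Complex.conj_ofReal]
        rcases eq_or_ne nx ny with rfl | hmn
        · rfl
        · simp [hmn, Ne.symm hmn]
      · simp only [Submodule.coe_add, map_add, inner_add_left, inner_add_right, hx, hy]
      · simp only [Submodule.coe_smul, map_smul, inner_smul_left, inner_smul_right, hx]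
    · intro z
      simp only [Submodule.coe_add, map_add, inner_add_left, inner_add_right, hx z, hy z]
    · intro z
      simp only [Submodule.coe_smul, map_smul, inner_smul_left, inner_smul_right, hx z]
  -- symmetry of B
  have Bsym : ∀ x y : finSupp, ⟪Bmap x, (y : ℓ2Z)⟫ = ⟪(x : ℓ2Z), Bmap y⟫ := by
    have key : ∀ nx ny : ℤ, ⟪Bmap (e' nx), ((e' ny : finSupp) : ℓ2Z)⟫
        = ⟪((e' nx : finSupp) : ℓ2Z), Bmap (e' ny)⟫ := by
      intro nx ny
      rw [hB nx, hB ny]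
      simp only [eco]
      simp only [inner_smul_left, inner_smul_right, inner_sub_left, inner_sub_right,
        inner_eV, Complex.conj_ofReal, map_inv₀, map_mul, Complex.conj_I, map_ofNat]
      rcases eq_or_ne ny (nx + 1) with rfl | h1
      · rw [if_pos rfl, if_neg (by omega), if_neg (by omega), if_pos (by omega)]
        ring
      · rcases eq_or_ne ny (nx - 1) with rfl | h2
        · rw [if_neg (by omega), if_pos rfl, if_pos (by omega), if_neg (by omega)]
          ring
        · rw [if_neg (by omega), if_neg (by omega), if_neg (by omega), if_neg (by omega)]
          ring
    refine ind (fun x => ∀ y : finSupp, ⟪Bmap x, (y : ℓ2Z)⟫ = ⟪(x : ℓ2Z), Bmap y⟫)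
      (fun nx => ?_) (by simp) (fun x y hx hy => ?_) (fun c x hx => ?_)
    · refine ind (fun y => ⟪Bmap (e' nx), (y : ℓ2Z)⟫ = ⟪((e' nx : finSupp) : ℓ2Z), Bmap y⟫)
        (fun ny => key nx ny) (by simp) (fun x y hx hy => ?_) (fun c x hx => ?_)
      · simp only [Submodule.coe_add, map_add, inner_add_left, inner_add_right, hx, hy]
      · simp only [Submodule.coe_smul, map_smul, inner_smul_left, inner_smul_right, hx]
    · intro z
      simp only [Submodule.coe_add, map_add, inner_add_left, inner_add_right, hx z, hy z]
    · intro z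
      simp only [Submodule.coe_smul, map_smul, inner_smul_left, inner_smul_right, hx z]
    -- norm of the scalar (2i)⁻¹
  have normIhalf : ‖(2 * Complex.I)⁻¹‖ = 1 / 2 := by
    rw [norm_inv]
    simp [Complex.norm_I]
  -- constants
  set θ : ℝ := 1 / (1 + 2 * γ ^ 2 * t ^ 2) with hθdef
  have hθpos : 0 < θ := by positivity
  have hθ1 : θ ≤ 1 := by
    rw [hθdef, div_le_one (by positivity)]
    nlinarith [sq_nonneg (γ * t)]
  have hθt : θ * (γ ^ 2 * t ^ 2) ≤ 1 / 2 := by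
    rw [hθdef, div_mul_eq_mul_div, div_le_div_iff₀ (by positivity) (by norm_num)]
    nlinarith [sq_nonneg (γ * t)]
  set c2 : ℝ := min (θ * γ ^ 2 / 2) (1 / 2) with hc2def
  have hc2pos : 0 < c2 := lt_min (by positivity) (by norm_num)
  set C2 : ℝ := 4 * δ⁻¹ ^ 2 + 2 * γ ^ 2
    + (δ⁻¹ ^ 2 * (γ * ℓ ^ 2 * δ) ^ 2 + 2 * (L * γ * m) ^ 2 + 2 * γ ^ 2 * t ^ 2 + 1) with hC2def
  refine ⟨Real.sqrt c2, max (Real.sqrt c2) (Real.sqrt C2),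
    Real.sqrt_pos.2 hc2pos, le_max_left _ _, ?_⟩
  intro ψ
  set x : finSupp := ⟨(ψ : ℓ2Z), hdomh ▸ ψ.2⟩ with hxdef
  set u : ℓ2Z := Bmap x with hudef
  set v : ℓ2Z := Pmap x with hvdef
  set w : ℓ2Z := (ψ : ℓ2Z) with hwdef
  have hxw : ((x : finSupp) : ℓ2Z) = w := rfl
  have hval : (h ψ : ℓ2Z) = Hmap x := rfl
  have hpv : (p ⟨(ψ : ℓ2Z), hle ψ.2⟩ : ℓ2Z) = v := rfl
  -- inner product reductions
  have hBB : ⟪w, Bmap (B x)⟫ = ⟪u, u⟫ := by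
    have hs := Bsym x (B x)
    rw [hBcoe x, hxw] at hs
    exact hs.symm
  have hPP2 : ⟪w, Pmap (P x)⟫ = ⟪v, v⟫ := by
    have hs := Psym x (P x)
    rw [hPcoe x, hxw] at hs
    exact hs.symm
  -- the quadratic form as a sum of squares
  have hF : (⟪w, (h ψ : ℓ2Z)⟫).re + (L ^ 2 * m ^ 2 * γ ^ 2 + 1) * ‖w‖ ^ 2
      = ‖((δ⁻¹ : ℝ) : ℂ) • u + ((L * γ * m : ℝ) : ℂ) • w‖ ^ 2
        + γ ^ 2 * ‖v - ((t : ℝ) : ℂ) • w‖ ^ 2 + ‖w‖ ^ 2 := by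
    rw [hval, E x, hxw]
    simp only [inner_add_right, inner_sub_right, inner_smul_right, hBB, hPP2]
    exact quad_identity u v w L γ m δ t hδ
  set X : ℓ2Z := ((δ⁻¹ : ℝ) : ℂ) • u + ((L * γ * m : ℝ) : ℂ) • w with hXdef
  set Y : ℓ2Z := v - ((t : ℝ) : ℂ) • w with hYdef
  -- basic norm estimates
  have hvY : ‖v‖ ≤ ‖Y‖ + |t| * ‖w‖ := by
    have : v = Y + ((t : ℝ) : ℂ) • w := by rw [hYdef, sub_add_cancel]
    calc ‖v‖ = ‖Y + ((t : ℝ) : ℂ) • w‖ := by rw [← this]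
    _ ≤ ‖Y‖ + ‖((t : ℝ) : ℂ) • w‖ := norm_add_le _ _
    _ = ‖Y‖ + |t| * ‖w‖ := by rw [norm_smul, Complex.norm_real, Real.norm_eq_abs]
  have hYv : ‖Y‖ ≤ ‖v‖ + |t| * ‖w‖ := by
    calc ‖Y‖ ≤ ‖v‖ + ‖((t : ℝ) : ℂ) • w‖ := norm_sub_le _ _
    _ = ‖v‖ + |t| * ‖w‖ := by rw [norm_smul, Complex.norm_real, Real.norm_eq_abs]
  have hu_le : ‖u‖ ≤ ‖v‖ + γ * ℓ ^ 2 * δ / 2 * ‖w‖ := by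
    have h1 := I1 x
    have h2 := I2 x
    rw [hxw] at h2
    rw [h2] at h1
    have hr : (0:ℝ) < γ * ℓ ^ 2 * δ := by positivity
    calc ‖u‖ = ‖(2 * Complex.I)⁻¹‖
        * ‖shiftL v + ((γ * ℓ ^ 2 * δ : ℝ) : ℂ) • shiftL w - shiftL.symm v‖ := by
          rw [hudef, h1, norm_smul]
    _ = 1 / 2 * ‖shiftL v + ((γ * ℓ ^ 2 * δ : ℝ) : ℂ) • shiftL w - shiftL.symm v‖ := by
          rw [normIhalf]
    _ ≤ 1 / 2 * (‖shiftL v + ((γ * ℓ ^ 2 * δ : ℝ) : ℂ) • shiftL w‖ + ‖shiftL.symm v‖) := by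
          gcongr
          exact norm_sub_le _ _
    _ ≤ 1 / 2 * (‖shiftL v‖ + ‖((γ * ℓ ^ 2 * δ : ℝ) : ℂ) • shiftL w‖ + ‖shiftL.symm v‖) := by
          gcongr
          exact norm_add_le _ _
    _ = 1 / 2 * (‖v‖ + γ * ℓ ^ 2 * δ * ‖w‖ + ‖v‖) := by
          rw [norm_smul, Complex.norm_real, Real.norm_eq_abs, abs_of_pos hr,
            shiftL.norm_map, shiftL.norm_map, shiftL.symm.norm_map]
    _ = ‖v‖ + γ * ℓ ^ 2 * δ / 2 * ‖w‖ := by ring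
  -- squared estimates
  have hv2 : ‖v‖ ^ 2 ≤ 2 * ‖Y‖ ^ 2 + 2 * t ^ 2 * ‖w‖ ^ 2 := by
    have hb := sq_add_bound (norm_nonneg Y) (mul_nonneg (abs_nonneg t) (norm_nonneg w)) hvY
      (norm_nonneg v)
    rw [mul_pow, sq_abs] at hb
    linarith [hb]
  have hY2 : ‖Y‖ ^ 2 ≤ 2 * ‖v‖ ^ 2 + 2 * t ^ 2 * ‖w‖ ^ 2 := by
    have hb := sq_add_bound (norm_nonneg v) (mul_nonneg (abs_nonneg t) (norm_nonneg w)) hYv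
      (norm_nonneg Y)
    rw [mul_pow, sq_abs] at hb
    linarith [hb]
  have hu2 : ‖u‖ ^ 2 ≤ 2 * ‖v‖ ^ 2 + 2 * (γ * ℓ ^ 2 * δ / 2) ^ 2 * ‖w‖ ^ 2 := by
    have hb := sq_add_bound (norm_nonneg v)
      (mul_nonneg (by positivity : (0:ℝ) ≤ γ * ℓ ^ 2 * δ / 2) (norm_nonneg w)) hu_le
      (norm_nonneg u)
    rw [mul_pow] at hb
    linarith [hb]
  have hX_le : ‖X‖ ≤ δ⁻¹ * ‖u‖ + |L * γ * m| * ‖w‖ := by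
    calc ‖X‖ ≤ ‖((δ⁻¹ : ℝ) : ℂ) • u‖ + ‖((L * γ * m : ℝ) : ℂ) • w‖ := norm_add_le _ _
    _ = δ⁻¹ * ‖u‖ + |L * γ * m| * ‖w‖ := by
        rw [norm_smul, norm_smul, Complex.norm_real, Complex.norm_real,
          Real.norm_eq_abs, Real.norm_eq_abs, abs_of_pos (inv_pos.2 hδ)]
  have hX2 : ‖X‖ ^ 2 ≤ 2 * δ⁻¹ ^ 2 * ‖u‖ ^ 2 + 2 * (L * γ * m) ^ 2 * ‖w‖ ^ 2 := by
    have hb := sq_add_bound (mul_nonneg (le_of_lt (inv_pos.2 hδ)) (norm_nonneg u))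
      (mul_nonneg (abs_nonneg (L * γ * m)) (norm_nonneg w)) hX_le (norm_nonneg X)
    rw [mul_pow, mul_pow, sq_abs] at hb
    linarith [hb]
  -- lower bound
  have lower : c2 * (‖v‖ ^ 2 + ‖w‖ ^ 2) ≤ ‖X‖ ^ 2 + γ ^ 2 * ‖Y‖ ^ 2 + ‖w‖ ^ 2 := by
    have k1 : c2 * ‖v‖ ^ 2 ≤ θ * γ ^ 2 / 2 * ‖v‖ ^ 2 :=
      mul_le_mul_of_nonneg_right (min_le_left _ _) (sq_nonneg _)
    have k2 : θ * γ ^ 2 / 2 * ‖v‖ ^ 2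
        ≤ θ * γ ^ 2 / 2 * (2 * ‖Y‖ ^ 2 + 2 * t ^ 2 * ‖w‖ ^ 2) :=
      mul_le_mul_of_nonneg_left hv2 (by positivity)
    have k3 : θ * γ ^ 2 * ‖Y‖ ^ 2 ≤ γ ^ 2 * ‖Y‖ ^ 2 := by
      have hk := mul_le_mul_of_nonneg_right hθ1 (by positivity : (0:ℝ) ≤ γ ^ 2 * ‖Y‖ ^ 2)
      linarith [hk]
    have k4 : θ * (γ ^ 2 * t ^ 2) * ‖w‖ ^ 2 ≤ 1 / 2 * ‖w‖ ^ 2 :=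
      mul_le_mul_of_nonneg_right hθt (sq_nonneg _)
    have k5 : c2 * ‖w‖ ^ 2 ≤ 1 / 2 * ‖w‖ ^ 2 :=
      mul_le_mul_of_nonneg_right (min_le_right _ _) (sq_nonneg _)
    linarith [k1, k2, k3, k4, k5, sq_nonneg ‖X‖]
  -- upper bound
  have upper : ‖X‖ ^ 2 + γ ^ 2 * ‖Y‖ ^ 2 + ‖w‖ ^ 2 ≤ C2 * (‖v‖ ^ 2 + ‖w‖ ^ 2) := by
    have k1 : 2 * δ⁻¹ ^ 2 * ‖u‖ ^ 2
        ≤ 2 * δ⁻¹ ^ 2 * (2 * ‖v‖ ^ 2 + 2 * (γ * ℓ ^ 2 * δ / 2) ^ 2 * ‖w‖ ^ 2) :=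
      mul_le_mul_of_nonneg_left hu2 (by positivity)
    have k2 : γ ^ 2 * ‖Y‖ ^ 2 ≤ γ ^ 2 * (2 * ‖v‖ ^ 2 + 2 * t ^ 2 * ‖w‖ ^ 2) :=
      mul_le_mul_of_nonneg_left hY2 (by positivity)
    have n1 : 0 ≤ (δ⁻¹ ^ 2 * (γ * ℓ ^ 2 * δ) ^ 2 + 2 * (L * γ * m) ^ 2 + 2 * γ ^ 2 * t ^ 2 + 1)
        * ‖v‖ ^ 2 := by positivity
    have n2 : 0 ≤ (4 * δ⁻¹ ^ 2 + 2 * γ ^ 2) * ‖w‖ ^ 2 := by positivity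
    rw [hC2def]
    linarith [hX2, k1, k2, n1, n2]
  -- conclusion
  have hA0 : (0:ℝ) ≤ ‖v‖ ^ 2 + ‖w‖ ^ 2 := by positivity
  constructor
  · rw [hpv, hF]
    calc Real.sqrt c2 * Real.sqrt (‖v‖ ^ 2 + ‖w‖ ^ 2)
        = Real.sqrt (c2 * (‖v‖ ^ 2 + ‖w‖ ^ 2)) := (Real.sqrt_mul hc2pos.le _).symm
    _ ≤ Real.sqrt (‖X‖ ^ 2 + γ ^ 2 * ‖Y‖ ^ 2 + ‖w‖ ^ 2) := Real.sqrt_le_sqrt lower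
  · rw [hpv, hF]
    calc Real.sqrt (‖X‖ ^ 2 + γ ^ 2 * ‖Y‖ ^ 2 + ‖w‖ ^ 2)
        ≤ Real.sqrt (C2 * (‖v‖ ^ 2 + ‖w‖ ^ 2)) := Real.sqrt_le_sqrt upper
    _ = Real.sqrt C2 * Real.sqrt (‖v‖ ^ 2 + ‖w‖ ^ 2) := by
        rw [Real.sqrt_mul (by positivity) _]
    _ ≤ max (Real.sqrt c2) (Real.sqrt C2) * Real.sqrt (‖v‖ ^ 2 + ‖w‖ ^ 2) := by
        gcongr
        exact le_max_right _ _
end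
end

section
/- Let ψ: ℤ → ℂ satisfy the eigenvalue recurrence ω ψ(η) = −(γ²ℓ⁴/4)(η+2)(η+1)ψ(η+2) − iγ²ℓ²Lm(η+1)ψ(η+1) + [(γ²ℓ⁴/4)(η+1)² + (γ²ℓ⁴/4)(1+4δ²γ²)η²]ψ(η) + iγ²ℓ²Lm η ψ(η−1) − (γ²ℓ⁴/4)η(η−1)ψ(η−2) for all η ∈ ℤ. If ψ(−1) = ψ(−2) = 0 then ψ(η) = 0 for all η < 0; if ψ(0) = ψ(1) = 0 then ψ(η) = 0 for all η ≥ 0. -/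
noncomputable section

/-- Super-selection of the two sectors of the loop quantum Schwarzschild eigen-equation:
for a solution `ψ` of the five-term recurrence `h^{(m)}ψ = ωψ` (case `ε_b = 0 = b₀`),
the negative half of the lattice is determined by `ψ(−1), ψ(−2)` and the non-negative half
by `ψ(0), ψ(1)`. -/
theorem sector_decoupling
    (γ ℓ L δ m ω : ℝ) (hγ : 0 < γ) (hℓ : 0 < ℓ) (hL : 0 < L) (hδ : 0 < δ)
    (ψ : ℤ → ℂ)
    (hrec : ∀ η : ℤ, (ω : ℂ) * ψ η =
      -(((γ ^ 2 * ℓ ^ 4 / 4 : ℝ) : ℂ)) * ((η : ℂ) + 2) * ((η : ℂ) + 1) * ψ (η + 2)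
      - Complex.I * ((γ ^ 2 * ℓ ^ 2 * L * m : ℝ) : ℂ) * ((η : ℂ) + 1) * ψ (η + 1)
      + (((γ ^ 2 * ℓ ^ 4 / 4 : ℝ) : ℂ) * ((η : ℂ) + 1) ^ 2
          + ((γ ^ 2 * ℓ ^ 4 / 4 * (1 + 4 * δ ^ 2 * γ ^ 2) : ℝ) : ℂ) * (η : ℂ) ^ 2) * ψ η
      + Complex.I * ((γ ^ 2 * ℓ ^ 2 * L * m : ℝ) : ℂ) * (η : ℂ) * ψ (η - 1)
      - ((γ ^ 2 * ℓ ^ 4 / 4 : ℝ) : ℂ) * (η : ℂ) * ((η : ℂ) - 1) * ψ (η - 2)) :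
    (ψ (-1) = 0 → ψ (-2) = 0 → ∀ η : ℤ, η < 0 → ψ η = 0) ∧
    (ψ 0 = 0 → ψ 1 = 0 → ∀ η : ℤ, 0 ≤ η → ψ η = 0) := by
  have hc : ((γ ^ 2 * ℓ ^ 4 / 4 : ℝ) : ℂ) ≠ 0 := by
    rw [ne_eq, Complex.ofReal_eq_zero]
    positivity
  constructor
  · intro h1 h2 η hη
    have key : ∀ n : ℕ, ψ (-1 - n) = 0 := by
      intro n
      induction n using Nat.strong_induction_on with
      | _ n ih =>
        match n, ih with
        | 0, _ => simpa using h1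
        | 1, _ => rw [show (-1 - ((1:ℕ):ℤ)) = -2 by norm_num]; exact h2
        | (k+2), ih =>
          set η0 : ℤ := -(k : ℤ) - 1 with hη0
          have hz0 : ψ η0 = 0 := by
            have h := ih k (by omega)
            rwa [show (-1 - (k:ℤ)) = η0 by rw [hη0]; ring] at h
          have hz1 : ψ (η0 - 1) = 0 := by
            have h := ih (k+1) (by omega)
            rwa [show (-1 - ((k+1:ℕ):ℤ)) = η0 - 1 by rw [hη0]; push_cast; ring] at h
          have t2 : ((η0 : ℂ) + 1) * ψ (η0 + 1) = 0 := by
            rcases Nat.eq_zero_or_pos k with hk | hk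
            · have : ((η0 : ℂ) + 1) = 0 := by
                subst hk; rw [hη0]; push_cast; ring
              rw [this, zero_mul]
            · have h := ih (k-1) (by omega)
              have he : (-1 - ((k-1:ℕ):ℤ)) = η0 + 1 := by
                have hcast : ((k-1:ℕ):ℤ) = (k:ℤ) - 1 := by omega
                rw [hcast, hη0]; ring
              rw [he] at h
              rw [h, mul_zero]
          have t1 : ((η0 : ℂ) + 2) * ((η0 : ℂ) + 1) * ψ (η0 + 2) = 0 := by
            match k with
            | 0 =>
              have h0 : ((η0 : ℂ) + 1) = 0 := by rw [hη0]; push_cast; ring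
              rw [h0, mul_zero, zero_mul]
            | 1 =>
              have h0 : ((η0 : ℂ) + 2) = 0 := by rw [hη0]; push_cast; ring
              rw [h0, zero_mul, zero_mul]
            | (k'+2) =>
              have h := ih k' (by omega)
              have he : (-1 - (k':ℤ)) = η0 + 2 := by rw [hη0]; push_cast; ring
              rw [he] at h
              rw [h, mul_zero]
          have hr := hrec η0
          rw [hz0, hz1] at hr
          have hkey : ((γ ^ 2 * ℓ ^ 4 / 4 : ℝ) : ℂ) * (η0 : ℂ) * ((η0 : ℂ) - 1)
              * ψ (η0 - 2) = 0 := by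
            linear_combination hr - ((γ ^ 2 * ℓ ^ 4 / 4 : ℝ) : ℂ) * t1
              - Complex.I * ((γ ^ 2 * ℓ ^ 2 * L * m : ℝ) : ℂ) * t2
          have hne1 : (η0 : ℂ) ≠ 0 := Int.cast_ne_zero.mpr (show η0 ≠ 0 by omega)
          have hne2 : (η0 : ℂ) - 1 ≠ 0 := by
            have h : ((η0 - 1 : ℤ) : ℂ) ≠ 0 := Int.cast_ne_zero.mpr (by omega)
            push_cast at h
            exact h
          have hψ := (mul_eq_zero.mp hkey).resolve_left
            (mul_ne_zero (mul_ne_zero hc hne1) hne2)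
          rwa [show (-1 - ((k+2:ℕ):ℤ)) = η0 - 2 by rw [hη0]; push_cast; ring]
    have hrepr : η = -1 - ((-η - 1).toNat : ℤ) := by omega
    rw [hrepr]
    exact key _
  · intro h1 h2 η hη
    have key : ∀ n : ℕ, ψ n = 0 := by
      intro n
      induction n using Nat.strong_induction_on with
      | _ n ih =>
        match n, ih with
        | 0, _ => simpa using h1
        | 1, _ => simpa using h2
        | (k+2), ih =>
          set η0 : ℤ := (k : ℤ) with hη0
          have hz0 : ψ η0 = 0 := by
            have h := ih k (by omega); rwa [hη0]
          have hz1 : ψ (η0 + 1) = 0 := by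
            have h := ih (k+1) (by omega)
            rwa [show ((k+1:ℕ):ℤ) = η0 + 1 by rw [hη0]; push_cast; ring] at h
          have t3 : (η0 : ℂ) * ψ (η0 - 1) = 0 := by
            rcases Nat.eq_zero_or_pos k with hk | hk
            · have h0 : ((η0 : ℂ)) = 0 := by subst hk; rw [hη0]; push_cast; ring
              rw [h0, zero_mul]
            · have h := ih (k-1) (by omega)
              have he : ((k-1:ℕ):ℤ) = η0 - 1 := by rw [hη0]; omega
              rw [he] at h
              rw [h, mul_zero]
          have t4 : (η0 : ℂ) * ((η0 : ℂ) - 1) * ψ (η0 - 2) = 0 := by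
            match k with
            | 0 =>
              have h0 : ((η0 : ℂ)) = 0 := by rw [hη0]; push_cast; ring
              rw [h0, zero_mul, zero_mul]
            | 1 =>
              have h0 : ((η0 : ℂ) - 1) = 0 := by rw [hη0]; push_cast; ring
              rw [h0, mul_zero, zero_mul]
            | (k'+2) =>
              have h := ih k' (by omega)
              have he : ((k':ℕ):ℤ) = η0 - 2 := by rw [hη0]; push_cast; ring
              rw [he] at h
              rw [h, mul_zero]
          have hr := hrec η0
          rw [hz0, hz1] at hr
          have hkey : ((γ ^ 2 * ℓ ^ 4 / 4 : ℝ) : ℂ) * ((η0 : ℂ) + 2) * ((η0 : ℂ) + 1)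
              * ψ (η0 + 2) = 0 := by
            linear_combination hr + Complex.I * ((γ ^ 2 * ℓ ^ 2 * L * m : ℝ) : ℂ) * t3
              - ((γ ^ 2 * ℓ ^ 4 / 4 : ℝ) : ℂ) * t4
          have hne1 : (η0 : ℂ) + 2 ≠ 0 := by
            have h : ((η0 + 2 : ℤ) : ℂ) ≠ 0 := Int.cast_ne_zero.mpr (by omega)
            push_cast at h
            exact h
          have hne2 : (η0 : ℂ) + 1 ≠ 0 := by
            have h : ((η0 + 1 : ℤ) : ℂ) ≠ 0 := Int.cast_ne_zero.mpr (by omega)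
            push_cast at h
            exact h
          have hψ := (mul_eq_zero.mp hkey).resolve_left
            (mul_ne_zero (mul_ne_zero hc hne1) hne2)
          rwa [show ((k+2:ℕ):ℤ) = η0 + 2 by rw [hη0]; push_cast; ring]
    have hrepr : η = (η.toNat : ℤ) := by omega
    rw [hrepr]
    exact key _
end
end
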